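/- arXiv:2310.08930 — 9 statements merged into one kernel-verified Lean document; each statement's English description precedes it below -/
import Mathlib

section
/- Every zero of the polynomial $A_n^\gamma(z)=\sum_{k=1}^n \gamma_k g_k(z)$ lies in the closed convex hull of $\{z_1,\dots,z_n\}$. -/
open Polynomial Finset

theorem zeros_of_convex_combination_in_convexHull
    (n : ℕ) (hn : 0 < n) (z : ℕ → ℂ) (γ : ℕ → ℝ)
    (hγ0 : ∀ k ∈ Finset.range n, 0 ≤ γ k)
    (hγ1 : ∑ k ∈ Finset.range n, γ k = 1)
    (w : ℂ)
    (hw : (∑ k ∈ Finset.range n, C ((γ k : ℂ)) *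
        ∏ j ∈ (Finset.range n).erase k, (X - C (z j))).IsRoot w) :
    w ∈ convexHull ℝ (↑((Finset.range n).image z) : Set ℂ) := by
  have heval : ∑ k ∈ Finset.range n, (γ k : ℂ) *
      ∏ j ∈ (Finset.range n).erase k, (w - z j) = 0 := by
    have h := hw
    simpa [IsRoot, eval_finset_sum, eval_prod] using h
  by_cases hz : ∃ j ∈ Finset.range n, w = z j
  · obtain ⟨j, hj, rfl⟩ := hz
    refine subset_convexHull ℝ _ ?_
    simp only [Finset.coe_image, Set.mem_image, Finset.mem_coe]
    exact ⟨j, hj, rfl⟩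
  push_neg at hz
  have hne : ∀ j ∈ Finset.range n, w - z j ≠ 0 := fun j hj => sub_ne_zero.2 (hz j hj)
  have hP : (∏ j ∈ Finset.range n, (w - z j)) ≠ 0 := Finset.prod_ne_zero_iff.2 hne
  have hsum : ∑ k ∈ Finset.range n, (γ k : ℂ) / (w - z k) = 0 := by
    have hmul : (∑ k ∈ Finset.range n, (γ k : ℂ) / (w - z k)) *
        (∏ j ∈ Finset.range n, (w - z j)) = 0 := by
      rw [Finset.sum_mul]
      rw [← heval]
      refine Finset.sum_congr rfl fun k hk => ?_
      rw [← Finset.mul_prod_erase _ _ hk, div_mul_eq_mul_div, mul_comm (w - z k),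
        ← mul_assoc, mul_div_cancel_right₀ _ (hne k hk)]
    exact (mul_eq_zero.1 hmul).resolve_right hP
  set β : ℕ → ℝ := fun k => γ k / Complex.normSq (w - z k) with hβ
  have hβ0 : ∀ k ∈ Finset.range n, 0 ≤ β k := fun k hk =>
    div_nonneg (hγ0 k hk) (Complex.normSq_nonneg _)
  have hkey : ∑ k ∈ Finset.range n, (β k : ℂ) * (w - z k) = 0 := by
    have hconj := congrArg (starRingEnd ℂ) hsum
    rw [map_sum, map_zero] at hconj
    rw [← hconj]
    refine Finset.sum_congr rfl fun k hk => ?_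
    have hns : (Complex.normSq (w - z k) : ℂ) ≠ 0 :=
      Complex.ofReal_ne_zero.2 (Complex.normSq_pos.2 (hne k hk)).ne'
    have hu : (starRingEnd ℂ) (w - z k) ≠ 0 := by
      simpa using (starRingEnd ℂ).injective.ne (hne k hk)
    rw [map_div₀, Complex.conj_ofReal, eq_div_iff hu, mul_assoc, Complex.mul_conj, hβ]
    push_cast
    rw [div_mul_cancel₀ _ hns]
  -- derive S * w = ∑ β k * z k
  have hS0 : 0 < ∑ k ∈ Finset.range n, β k := by
    obtain ⟨k, hk, hγk⟩ : ∃ k ∈ Finset.range n, 0 < γ k := by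
      by_contra h
      push_neg at h
      have : ∑ k ∈ Finset.range n, γ k = 0 :=
        Finset.sum_eq_zero fun k hk => le_antisymm (h k hk) (hγ0 k hk)
      rw [hγ1] at this; norm_num at this
    refine Finset.sum_pos' hβ0 ⟨k, hk, ?_⟩
    exact div_pos hγk (Complex.normSq_pos.2 (hne k hk))
  have hcw : ((∑ k ∈ Finset.range n, β k : ℝ) : ℂ) * w
      = ∑ k ∈ Finset.range n, (β k : ℂ) * z k := by
    have h2 : ∑ k ∈ Finset.range n, ((β k : ℂ) * w - (β k : ℂ) * z k) = 0 := by
      simpa [mul_sub] using hkey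
    rw [Finset.sum_sub_distrib] at h2
    push_cast
    rw [Finset.sum_mul]
    linear_combination h2
  have hcm : (Finset.range n).centerMass β z = w := by
    rw [Finset.centerMass]
    have : ∑ k ∈ Finset.range n, β k • z k = ∑ k ∈ Finset.range n, (β k : ℂ) * z k := by
      refine Finset.sum_congr rfl fun k _ => ?_
      rw [Complex.real_smul]
    rw [this, ← hcw, Complex.real_smul]
    push_cast
    have hSne : (∑ i ∈ Finset.range n, (β i : ℂ)) ≠ 0 := by
      rw [← Complex.ofReal_sum]
      exact Complex.ofReal_ne_zero.2 hS0.ne'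
    rw [mul_comm _ w, mul_comm w, ← mul_assoc, inv_mul_cancel₀ hSne, one_mul]
  rw [← hcm]
  exact Finset.centerMass_mem_convexHull _ hβ0 hS0 fun k hk => by
    simp only [Finset.coe_image, Set.mem_image, Finset.mem_coe]
    exact ⟨k, hk, rfl⟩
end

section
/- Let $w_1,\dots,w_{n-1}$ be the zeros of $A_n^\gamma$ listed in descending order of modulus and set $w_n:=0$, and let $z_1,\dots,z_n$ be the zeros of $A_n$ in descending order of modulus. Then for every $1\le k\le n$, $\prod_{j=1}^k |w_j| \le \prod_{j=1}^k |z_j|$. -/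
/-!
Put `u = (√γ_k)_k`, a unit vector, and `Z = diag z`. If `V` is unitary with first column `u`,
the characteristic polynomial of the lower-right block `B` of `Vᴴ Z V` (the compression of `Z`
to `u^⊥`) is the `(0,0)` cofactor of `X - Vᴴ Z V`, which is `∑ γ_k ∏_{j ≠ k} (X - z_j) = A_n^γ`.
So the `w_j` are the eigenvalues of `B`, and splitting off eigenvectors one at a time (a Schur
triangularisation in the prescribed order) gives an isometry `P` with
`det (Pᴴ B P) = w_0 ⋯ w_{k-1}`; that is, `w_0 ⋯ w_{k-1} = det (Rᴴ Z R)` for an isometry `R`.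
By Cauchy–Binet, `k! det (Rᴴ Z R) = ∑_f (∏_a z_{f a}) |det R_f|²` over `f : Fin k → Fin n`,
and the same identity for `Z = 1` shows that the weights `|det R_f|² / k!` sum to `1`, so
`|det (Rᴴ Z R)|` is at most the largest product of `k` distinct `|z_j|`.
-/

open Polynomial Finset Matrix

theorem Finset.prod_le_prod_range_card_of_antitoneOn {g : ℕ → ℝ} {n : ℕ} (hg0 : ∀ i, 0 ≤ g i)
    (hg : AntitoneOn g (Set.Iio n)) {s : Finset ℕ} (hs : s ⊆ range n) :
    ∏ i ∈ s, g i ≤ ∏ j ∈ range s.card, g j := by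
  induction s using Finset.induction_on_max with
  | empty => simp
  | insert a t hlt ih =>
    have hat : a ∉ t := fun h => lt_irrefl a (hlt a h)
    have hcard : t.card ≤ a := by
      simpa using card_le_card fun x hx => mem_range.2 (hlt x hx)
    have ha : a < n := mem_range.1 (hs (mem_insert_self a t))
    rw [prod_insert hat, card_insert_of_notMem hat, prod_range_succ, mul_comm]
    exact mul_le_mul (ih fun x hx => hs (mem_insert_of_mem hx))
      (hg (Set.mem_Iio.2 (hcard.trans_lt ha)) (Set.mem_Iio.2 ha) hcard) (hg0 a)
      (prod_nonneg fun j _ => hg0 j)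

theorem Finset.prod_comp_le_prod_range_of_injective {g : ℕ → ℝ} {n k : ℕ} (hg0 : ∀ i, 0 ≤ g i)
    (hg : AntitoneOn g (Set.Iio n)) {f : Fin k → Fin n} (hf : Function.Injective f) :
    ∏ a, g (f a) ≤ ∏ j ∈ range k, g j := by
  have hf' : Function.Injective fun a => (f a : ℕ) := Fin.val_injective.comp hf
  have h := prod_le_prod_range_card_of_antitoneOn hg0 hg (s := univ.image fun a => (f a : ℕ))
    fun x hx => by
      obtain ⟨a, -, rfl⟩ := mem_image.1 hx
      exact mem_range.2 (f a).isLt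
  rwa [prod_image fun a _ b _ hab => hf' hab, card_image_of_injective _ hf', card_univ,
    Fintype.card_fin] at h

theorem Fin.prod_univ_erase_eq_prod_range_erase {M : Type*} [CommMonoid M] {n : ℕ} (f : ℕ → M)
    (i : Fin n) : ∏ j ∈ univ.erase i, f j = ∏ j ∈ (range n).erase i, f j := by
  have h := map_erase Fin.valEmbedding univ i
  rw [Fin.map_valEmbedding_univ, Nat.Iio_eq_range, Fin.valEmbedding_apply] at h
  rw [← h, prod_map]
  rfl

section CauchyBinet

theorem Matrix.det_mul_eq_sum_prod_mul_det_submatrix {ι κ R : Type*} [Fintype ι] [Fintype κ]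
    [DecidableEq κ] [CommRing R] (A : Matrix κ ι R) (B : Matrix ι κ R) :
    (A * B).det = ∑ f : κ → ι, (∏ a, B (f a) a) * (A.submatrix id f).det := by
  simp only [det_apply', mul_apply, Fintype.prod_sum, mul_sum, prod_mul_distrib, submatrix_apply,
    id]
  rw [sum_comm]
  exact sum_congr rfl fun f _ => sum_congr rfl fun σ _ => by ring

variable {ι κ : Type*} [Fintype ι] [DecidableEq ι] [Fintype κ] [DecidableEq κ]

theorem Matrix.factorial_card_mul_det_conjTranspose_mul_diagonal_mul (z : ι → ℂ)
    (R : Matrix ι κ ℂ) :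
    ((Fintype.card κ).factorial : ℂ) * (Rᴴ * diagonal z * R).det =
      ∑ f : κ → ι, (∏ a, z (f a)) * ((‖(R.submatrix f id).det‖ ^ 2 : ℝ) : ℂ) := by
  set T : (κ → ι) → ℂ := fun f =>
    (∏ a, z (f a)) * (∏ a, R (f a) a) * star (R.submatrix f id).det with hT
  have hdet : (Rᴴ * diagonal z * R).det = ∑ f, T f := by
    rw [Matrix.mul_assoc, det_mul_eq_sum_prod_mul_det_submatrix]
    refine sum_congr rfl fun f _ => ?_
    simp only [hT, diagonal_mul, prod_mul_distrib, ← conjTranspose_submatrix, det_conjTranspose]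
  have hperm : ∀ σ : Equiv.Perm κ, ∑ f, T f = ∑ f, T (f ∘ σ) := fun σ =>
    (Equiv.sum_comp (σ.symm.arrowCongr (Equiv.refl ι)) T).symm
  -- `T` summed over the orbit of `f` under `Perm κ`: both `∏ z (f a)` and `|det R_f|` are
  -- invariant, and the signed sum of the remaining products is `det R_f`.
  have horbit : ∀ f : κ → ι, ∑ σ : Equiv.Perm κ, T (f ∘ σ) =
      (∏ a, z (f a)) * ((‖(R.submatrix f id).det‖ ^ 2 : ℝ) : ℂ) := by
    intro f
    have hsign : ∀ σ : Equiv.Perm κ, (R.submatrix (f ∘ σ) id).det =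
        Equiv.Perm.sign σ * (R.submatrix f id).det := fun σ =>
      det_permute σ (R.submatrix f id)
    have hz : ∀ σ : Equiv.Perm κ, ∏ a, z (f (σ a)) = ∏ a, z (f a) := fun σ =>
      Equiv.prod_comp σ (fun a => z (f a))
    have hR : ∑ σ : Equiv.Perm κ, (Equiv.Perm.sign σ : ℂ) * ∏ a, R (f (σ a)) a =
        (R.submatrix f id).det := by
      rw [det_apply']
      rfl
    simp only [hT, Function.comp_apply, hsign, hz, star_mul', star_intCast]
    calc _ = (∏ a, z (f a)) * (∑ σ : Equiv.Perm κ, (Equiv.Perm.sign σ : ℂ) *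
          ∏ a, R (f (σ a)) a) * star (R.submatrix f id).det := by
          rw [mul_sum, sum_mul]
          exact sum_congr rfl fun σ _ => by ring
      _ = _ := by
          rw [hR, mul_assoc, Complex.star_def, RCLike.mul_conj]
          push_cast
          rfl
  rw [hdet, ← Fintype.card_perm, ← card_univ, ← nsmul_eq_mul, ← sum_const,
    sum_congr rfl fun σ _ => hperm σ, sum_comm]
  exact sum_congr rfl fun f _ => horbit f

theorem Matrix.norm_det_conjTranspose_mul_diagonal_mul_le {z : ι → ℂ} {R : Matrix ι κ ℂ}
    (hR : Rᴴ * R = 1) {c : ℝ} (hc : ∀ f : κ → ι, Function.Injective f → ∏ a, ‖z (f a)‖ ≤ c) :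
    ‖(Rᴴ * diagonal z * R).det‖ ≤ c := by
  set N : ℝ := ((Fintype.card κ).factorial : ℝ) with hNdef
  have hN : 0 < N := by positivity
  have hsum : N = ∑ f : κ → ι, ‖(R.submatrix f id).det‖ ^ 2 := by
    have h := factorial_card_mul_det_conjTranspose_mul_diagonal_mul (fun _ => 1) R
    rw [diagonal_one, Matrix.mul_one, hR, det_one] at h
    simp only [prod_const_one, one_mul, mul_one] at h
    rw [hNdef]
    exact_mod_cast h
  have hterm : ∀ f : κ → ι, (∏ a, ‖z (f a)‖) * ‖(R.submatrix f id).det‖ ^ 2 ≤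
      c * ‖(R.submatrix f id).det‖ ^ 2 := by
    intro f
    by_cases hf : Function.Injective f
    · exact mul_le_mul_of_nonneg_right (hc f hf) (sq_nonneg _)
    · obtain ⟨a, b, hab, hne⟩ := Function.not_injective_iff.1 hf
      rw [det_zero_of_row_eq hne (by ext; simp [hab])]
      simp
  refine le_of_mul_le_mul_left ?_ hN
  calc N * ‖(Rᴴ * diagonal z * R).det‖
      = ‖∑ f : κ → ι, (∏ a, z (f a)) * ((‖(R.submatrix f id).det‖ ^ 2 : ℝ) : ℂ)‖ := by
        rw [← factorial_card_mul_det_conjTranspose_mul_diagonal_mul, norm_mul]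
        simp [N]
    _ ≤ ∑ f : κ → ι, (∏ a, ‖z (f a)‖) * ‖(R.submatrix f id).det‖ ^ 2 := by
        refine (norm_sum_le _ _).trans (le_of_eq (sum_congr rfl fun f _ => ?_))
        rw [norm_mul, norm_prod, Complex.norm_real, Real.norm_of_nonneg (sq_nonneg _)]
    _ ≤ N * c := by
        rw [hsum, sum_mul]
        exact sum_le_sum fun f _ => (hterm f).trans_eq (mul_comm _ _)

end CauchyBinet

theorem Matrix.exists_unitary_col_eq {ι : Type*} [Fintype ι] [DecidableEq ι]
    {u : EuclideanSpace ℂ ι} (hu : ‖u‖ = 1) (i₀ : ι) :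
    ∃ V : Matrix ι ι ℂ, Vᴴ * V = 1 ∧ ∀ i, V i i₀ = u i := by
  have hcard : Module.finrank ℂ (EuclideanSpace ℂ ι) = Fintype.card ι := finrank_euclideanSpace
  have horth : Orthonormal ℂ (({i₀} : Set ι).domRestrict fun _ => u) := by
    rw [orthonormal_iff_ite]
    rintro ⟨i, rfl⟩ ⟨j, rfl⟩
    simp [Set.domRestrict, inner_self_eq_norm_sq_to_K, hu]
  obtain ⟨b, hb⟩ := horth.exists_orthonormalBasis_extension_of_card_eq hcard
  refine ⟨(EuclideanSpace.basisFun ι ℂ).toBasis.toMatrix b.toBasis,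
    (EuclideanSpace.basisFun ι ℂ).toMatrix_orthonormalBasis_conjTranspose_mul_self b, fun i => ?_⟩
  simp [Module.Basis.toMatrix_apply, hb i₀ rfl]

section Charmatrix

variable {R : Type*} [CommRing R] {n : Type*} [Fintype n] [DecidableEq n]

theorem Matrix.charmatrix_submatrix {m : Type*} [Fintype m] [DecidableEq m] (M : Matrix n n R)
    {e : m → n} (he : Function.Injective e) :
    charmatrix (M.submatrix e e) = (charmatrix M).submatrix e e := by
  ext i j : 1
  by_cases h : i = j
  · subst h; simp
  · simp [charmatrix_apply_ne _ _ _ h, charmatrix_apply_ne _ _ _ (he.ne h)]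

theorem Matrix.charmatrix_mul_mul_of_mul_eq_one {P Q : Matrix n n R} (hQP : Q * P = 1)
    (M : Matrix n n R) :
    charmatrix (Q * M * P) = Q.map C * charmatrix M * P.map C := by
  have hQP' : Q.map C * P.map C = (1 : Matrix n n R[X]) := by
    rw [← Matrix.map_mul, hQP, Matrix.map_one _ C_0 C_1]
  simp only [charmatrix, RingHom.mapMatrix_apply, Matrix.mul_sub, Matrix.sub_mul,
    Matrix.map_mul, scalar_apply]
  rw [← smul_one_eq_diagonal, Matrix.mul_smul, Matrix.mul_one, Matrix.smul_mul, hQP']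

theorem Matrix.adjugate_mul_mul_of_mul_eq_one {P Q : Matrix n n R} (hQP : Q * P = 1)
    (A : Matrix n n R) : adjugate (Q * A * P) = Q * adjugate A * P := by
  have hPQ : P * Q = 1 := mul_eq_one_comm.1 hQP
  have hP : adjugate P = P.det • Q := by
    rw [← Matrix.mul_one (adjugate P), ← hPQ, ← Matrix.mul_assoc, adjugate_mul, smul_one_mul]
  have hQ : adjugate Q = Q.det • P := by
    rw [← Matrix.mul_one (adjugate Q), ← hQP, ← Matrix.mul_assoc, adjugate_mul, smul_one_mul]
  have hdet : Q.det * P.det = 1 := by rw [← det_mul, hQP, det_one]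
  rw [adjugate_mul_distrib, adjugate_mul_distrib, hP, hQ]
  simp only [Matrix.mul_smul, Matrix.smul_mul, smul_smul, hdet, one_smul, Matrix.mul_assoc]

theorem Matrix.charpoly_submatrix_succ {m : ℕ} (M : Matrix (Fin (m + 1)) (Fin (m + 1)) R) :
    (M.submatrix Fin.succ Fin.succ).charpoly = adjugate (charmatrix M) 0 0 := by
  rw [adjugate_fin_succ_eq_det_submatrix, charpoly, charmatrix_submatrix _ (Fin.succ_injective _)]
  simp

theorem Matrix.charpoly_submatrix_succ_conjTranspose_mul_diagonal_mul [StarRing R]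
    {m : ℕ} {V : Matrix (Fin (m + 1)) (Fin (m + 1)) R} (hV : Vᴴ * V = 1)
    (d : Fin (m + 1) → R) :
    ((Vᴴ * diagonal d * V).submatrix Fin.succ Fin.succ).charpoly =
      ∑ i, C (star (V i 0) * V i 0) * ∏ j ∈ univ.erase i, (X - C (d j)) := by
  have hV' : Vᴴ.map C * V.map C = (1 : Matrix _ _ R[X]) := by
    rw [← Matrix.map_mul, hV, Matrix.map_one _ C_0 C_1]
  rw [charpoly_submatrix_succ, charmatrix_mul_mul_of_mul_eq_one hV,
    adjugate_mul_mul_of_mul_eq_one hV', charmatrix_diagonal, adjugate_diagonal, mul_apply]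
  refine sum_congr rfl fun i _ => ?_
  simp only [mul_diagonal, map_apply, conjTranspose_apply, map_mul]
  ring

end Charmatrix

theorem Matrix.exists_unitary_conj_mulVec_single_eq {ι : Type*} [Fintype ι]
    [DecidableEq ι] {B : Matrix ι ι ℂ} {μ : ℂ} (hμ : B.charpoly.IsRoot μ) (i₀ : ι) :
    ∃ V : Matrix ι ι ℂ, Vᴴ * V = 1 ∧ (Vᴴ * B * V) *ᵥ Pi.single i₀ 1 = μ • Pi.single i₀ 1 := by
  rw [IsRoot, eval_charpoly] at hμ
  obtain ⟨v, hv0, hv⟩ := exists_mulVec_eq_zero_iff.2 hμ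
  set u : EuclideanSpace ℂ ι := (‖WithLp.toLp 2 v‖⁻¹ : ℂ) • WithLp.toLp 2 v
  have hu : ‖u‖ = 1 := norm_smul_inv_norm (by simpa using hv0)
  have hBu : B *ᵥ u = μ • u := by
    rw [sub_mulVec, sub_eq_zero, scalar_apply, ← smul_one_eq_diagonal, smul_mulVec,
      one_mulVec] at hv
    rw [WithLp.ofLp_smul, WithLp.ofLp_toLp, mulVec_smul, ← hv, smul_comm]
  obtain ⟨V, hV, hVu⟩ := exists_unitary_col_eq hu i₀
  have hVe : V *ᵥ Pi.single i₀ 1 = u := by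
    ext i; simp [hVu]
  refine ⟨V, hV, ?_⟩
  rw [← mulVec_mulVec, hVe, ← mulVec_mulVec, hBu, mulVec_smul, ← hVe, mulVec_mulVec, hV, one_mulVec]

section FirstColumn

variable {R : Type*} [CommRing R] {m : ℕ}

theorem Matrix.det_eq_mul_det_submatrix_succ_of_col_zero (M : Matrix (Fin (m + 1)) (Fin (m + 1)) R)
    (h : ∀ i ≠ 0, M i 0 = 0) : M.det = M 0 0 * (M.submatrix Fin.succ Fin.succ).det := by
  rw [det_succ_column_zero, Fin.sum_univ_succ]
  simp [h _ (Fin.succ_ne_zero _)]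

theorem Matrix.charpoly_eq_X_sub_C_mul_charpoly_submatrix_succ
    (M : Matrix (Fin (m + 1)) (Fin (m + 1)) R) (h : ∀ i ≠ 0, M i 0 = 0) :
    M.charpoly = (X - C (M 0 0)) * (M.submatrix Fin.succ Fin.succ).charpoly := by
  rw [charpoly, det_eq_mul_det_submatrix_succ_of_col_zero, charpoly,
    charmatrix_submatrix _ (Fin.succ_injective _), charmatrix_apply_eq]
  intro i hi
  rw [charmatrix_apply_ne _ _ _ hi, h i hi, C_0, neg_zero]

/-- The block-diagonal matrix `1 ⊕ P`. -/
def Matrix.oneDirectSum {k : ℕ} (P : Matrix (Fin m) (Fin k) R) :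
    Matrix (Fin (m + 1)) (Fin (k + 1)) R :=
  of (vecCons (Pi.single 0 1) fun i => vecCons 0 (P i))

variable [StarRing R] {k : ℕ}

theorem Matrix.oneDirectSum_conjTranspose_mul_self {P : Matrix (Fin m) (Fin k) R}
    (hP : Pᴴ * P = 1) : (oneDirectSum P)ᴴ * oneDirectSum P = 1 := by
  have hP' : ∀ a b, ∑ i, star (P i a) * P i b = (1 : Matrix (Fin k) (Fin k) R) a b := by
    simp [← hP, mul_apply]
  ext a b
  refine Fin.cases ?_ (fun a => ?_) a <;> refine Fin.cases ?_ (fun b => ?_) b <;>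
    simp [oneDirectSum, mul_apply, Fin.sum_univ_succ, hP', one_apply, (Fin.succ_ne_zero _).symm]

theorem Matrix.det_conjTranspose_oneDirectSum_mul_mul (P : Matrix (Fin m) (Fin k) R)
    (M : Matrix (Fin (m + 1)) (Fin (m + 1)) R) (hM : ∀ i ≠ 0, M i 0 = 0) :
    ((oneDirectSum P)ᴴ * M * oneDirectSum P).det =
      M 0 0 * (Pᴴ * M.submatrix Fin.succ Fin.succ * P).det := by
  have hME0 : ∀ i, (M * oneDirectSum P) i 0 = M i 0 := fun i => by
    simp [oneDirectSum, mul_apply, Fin.sum_univ_succ]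
  have hME : ∀ i b, (M * oneDirectSum P) i b.succ = ∑ l, M i l.succ * P l b := fun i b => by
    simp [oneDirectSum, mul_apply, Fin.sum_univ_succ]
  have hN : ∀ a b, ((oneDirectSum P)ᴴ * M * oneDirectSum P) a b =
      ∑ i, star (oneDirectSum P i a) * (M * oneDirectSum P) i b := fun a b => by
    rw [Matrix.mul_assoc, mul_apply]
    simp only [conjTranspose_apply]
  have h00 : ((oneDirectSum P)ᴴ * M * oneDirectSum P) 0 0 = M 0 0 := by
    simp only [hN, Fin.sum_univ_succ, hME0]
    simp [oneDirectSum]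
  have hsub : ((oneDirectSum P)ᴴ * M * oneDirectSum P).submatrix Fin.succ Fin.succ =
      Pᴴ * M.submatrix Fin.succ Fin.succ * P := by
    ext a b
    simp only [submatrix_apply, hN, Fin.sum_univ_succ, hME, mul_apply, conjTranspose_apply]
    simp only [oneDirectSum, of_apply, cons_val_zero, cons_val_succ,
      Pi.single_eq_of_ne (Fin.succ_ne_zero a), star_zero, zero_mul, zero_add, mul_sum, sum_mul,
      mul_assoc, sum_const_zero]
    exact sum_comm
  rw [det_eq_mul_det_submatrix_succ_of_col_zero, h00, hsub]
  intro i hi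
  simp only [hN, Fin.sum_univ_succ, hME0, hM _ (Fin.succ_ne_zero _)]
  obtain ⟨i, rfl⟩ := Fin.exists_succ_eq.2 hi
  simp [oneDirectSum]

end FirstColumn

theorem Matrix.exists_isometry_det_conj_eq_prod {m : ℕ}
    {B : Matrix (Fin m) (Fin m) ℂ} {w : ℕ → ℂ} (hB : B.charpoly = ∏ j ∈ range m, (X - C (w j)))
    {k : ℕ} (hk : k ≤ m) :
    ∃ P : Matrix (Fin m) (Fin k) ℂ, Pᴴ * P = 1 ∧ (Pᴴ * B * P).det = ∏ j ∈ range k, w j := by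
  induction k generalizing m B w with
  | zero => exact ⟨0, Subsingleton.elim _ _, by simp⟩
  | succ k ih =>
    obtain ⟨m, rfl⟩ : ∃ m', m = m' + 1 := ⟨m - 1, by omega⟩
    have hroot : B.charpoly.IsRoot (w 0) := by
      rw [hB, prod_range_succ', IsRoot, eval_mul, eval_sub, eval_X, eval_C, sub_self, mul_zero]
    obtain ⟨V, hV, hVB⟩ := exists_unitary_conj_mulVec_single_eq hroot 0
    set M := Vᴴ * B * V with hMdef
    have hcol : ∀ i, M i 0 = w 0 * (Pi.single 0 1 : Fin (m + 1) → ℂ) i := fun i => by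
      simpa [mulVec_single_one] using congrFun hVB i
    have hM : ∀ i ≠ 0, M i 0 = 0 := fun i hi => by rw [hcol, Pi.single_eq_of_ne hi, mul_zero]
    have hM00 : M 0 0 = w 0 := by rw [hcol, Pi.single_eq_same, mul_one]
    have hMchar : M.charpoly = B.charpoly := by
      rw [hMdef, Matrix.mul_assoc, charpoly_mul_comm, Matrix.mul_assoc, mul_eq_one_comm.1 hV,
        Matrix.mul_one]
    have hM' : (M.submatrix Fin.succ Fin.succ).charpoly =
        ∏ j ∈ range m, (X - C (w (j + 1))) := by
      refine mul_left_cancel₀ (X_sub_C_ne_zero (w 0)) ?_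
      rw [← hM00, ← charpoly_eq_X_sub_C_mul_charpoly_submatrix_succ M hM, hMchar, hB,
        prod_range_succ', mul_comm, hM00]
    obtain ⟨P, hP, hdet⟩ := ih hM' (by omega)
    refine ⟨V * oneDirectSum P, ?_, ?_⟩
    · rw [conjTranspose_mul, Matrix.mul_assoc, ← Matrix.mul_assoc Vᴴ, hV, Matrix.one_mul,
        oneDirectSum_conjTranspose_mul_self hP]
    · have hconj : (V * oneDirectSum P)ᴴ * B * (V * oneDirectSum P) =
          (oneDirectSum P)ᴴ * M * oneDirectSum P := by
        simp only [hMdef, conjTranspose_mul, Matrix.mul_assoc]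
      rw [hconj, det_conjTranspose_oneDirectSum_mul_mul P M hM, hM00, hdet, prod_range_succ',
        mul_comm]

theorem Matrix.exists_isometry_charpoly_conj_diagonal_eq {m : ℕ} {γ : ℕ → ℝ}
    (hγ0 : ∀ k ∈ range (m + 1), 0 ≤ γ k) (hγ1 : ∑ k ∈ range (m + 1), γ k = 1) (z : ℕ → ℂ) :
    ∃ W : Matrix (Fin (m + 1)) (Fin m) ℂ, Wᴴ * W = 1 ∧
      (Wᴴ * diagonal (fun i : Fin (m + 1) => z i) * W).charpoly =
        ∑ k ∈ range (m + 1), C (γ k : ℂ) * ∏ j ∈ (range (m + 1)).erase k, (X - C (z j)) := by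
  have hγ : ∀ i : Fin (m + 1), 0 ≤ γ i := fun i => hγ0 i (mem_range.2 i.isLt)
  set u : EuclideanSpace ℂ (Fin (m + 1)) := WithLp.toLp 2 fun i => (√(γ i) : ℂ)
  have hu : ‖u‖ = 1 := by
    rw [EuclideanSpace.norm_eq, Real.sqrt_eq_one, ← hγ1, ← Fin.sum_univ_eq_sum_range]
    exact sum_congr rfl fun i _ => by simp [u, Real.sq_sqrt (hγ i)]
  obtain ⟨V, hV, hVu⟩ := exists_unitary_col_eq hu 0
  refine ⟨V.submatrix id Fin.succ, ?_, ?_⟩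
  · rw [← submatrix_one _ (Fin.succ_injective m), ← hV,
      submatrix_mul _ _ _ id _ Function.bijective_id]
    rfl
  · have hsub : (V.submatrix id Fin.succ)ᴴ * diagonal (fun i : Fin (m + 1) => z i) *
        V.submatrix id Fin.succ =
        (Vᴴ * diagonal (fun i : Fin (m + 1) => z i) * V).submatrix Fin.succ Fin.succ := by
      rw [submatrix_mul _ _ _ id _ Function.bijective_id,
        submatrix_mul _ _ _ id _ Function.bijective_id, submatrix_id_id]
      rfl
    rw [hsub, charpoly_submatrix_succ_conjTranspose_mul_diagonal_mul hV,
      ← Fin.sum_univ_eq_sum_range]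
    refine sum_congr rfl fun i _ => ?_
    have hγi : star (V i 0) * V i 0 = γ i := by
      rw [hVu, Complex.star_def]
      simp [u, ← Complex.ofReal_mul, Real.mul_self_sqrt (hγ i)]
    rw [hγi, Fin.prod_univ_erase_eq_prod_range_erase (fun j => X - C (z j))]

theorem majorization_zeros_incomplete_combination_general
    (n : ℕ) (z w : ℕ → ℂ) (γ : ℕ → ℝ)
    (hγ0 : ∀ k ∈ Finset.range n, 0 ≤ γ k)
    (hγ1 : ∑ k ∈ Finset.range n, γ k = 1)
    -- z lists the zeros of Aₙ in descending order of modulus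
    (hzdesc : ∀ i j, i ≤ j → j < n → ‖z j‖ ≤ ‖z i‖)
    (hwn : w (n - 1) = 0)
    (hroots : (∑ k ∈ Finset.range n, C ((γ k : ℂ)) *
        ∏ j ∈ (Finset.range n).erase k, (X - C (z j)))
        = ∏ j ∈ Finset.range (n - 1), (X - C (w j))) :
    ∀ k, 1 ≤ k → k ≤ n →
      ∏ j ∈ Finset.range k, ‖w j‖ ≤
        ∏ j ∈ Finset.range k, ‖z j‖ := by
  intro k _ hkn
  obtain ⟨m, rfl⟩ : ∃ m, n = m + 1 := ⟨n - 1, by omega⟩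
  rw [Nat.add_sub_cancel] at hwn hroots
  obtain rfl | hkm := eq_or_lt_of_le hkn
  · rw [prod_eq_zero (self_mem_range_succ m) (by rw [hwn, norm_zero])]
    exact prod_nonneg fun j _ => norm_nonneg _
  obtain ⟨W, hW, hB⟩ := exists_isometry_charpoly_conj_diagonal_eq hγ0 hγ1 z
  rw [hroots] at hB
  obtain ⟨P, hP, hdet⟩ := exists_isometry_det_conj_eq_prod hB (by omega : k ≤ m)
  have hWP : (W * P)ᴴ * (W * P) = 1 := by
    rw [conjTranspose_mul, Matrix.mul_assoc, ← Matrix.mul_assoc Wᴴ, hW, Matrix.one_mul, hP]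
  calc ∏ j ∈ range k, ‖w j‖
      = ‖((W * P)ᴴ * diagonal (fun i : Fin (m + 1) => z i) * (W * P)).det‖ := by
        rw [← norm_prod, ← hdet]
        simp only [conjTranspose_mul, Matrix.mul_assoc]
    _ ≤ ∏ j ∈ range k, ‖z j‖ :=
        norm_det_conjTranspose_mul_diagonal_mul_le hWP fun _ hf =>
          prod_comp_le_prod_range_of_injective (g := fun j => ‖z j‖) (fun _ => norm_nonneg _)
            (fun i _ j hj hij => hzdesc i j hij hj) hf

theorem majorization_zeros_incomplete_combination
    (n : ℕ) (hn : 1 ≤ n) (z w : ℕ → ℂ) (γ : ℕ → ℝ)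
    (hγ0 : ∀ k ∈ Finset.range n, 0 ≤ γ k)
    (hγ1 : ∑ k ∈ Finset.range n, γ k = 1)
    -- z lists the zeros of Aₙ in descending order of modulus
    (hzdesc : ∀ i j, i ≤ j → j < n → ‖z j‖ ≤ ‖z i‖)
    -- w lists the zeros of Aₙ^γ (a monic polynomial of degree n-1)
    -- in descending order of modulus, and wₙ := 0
    (hwdesc : ∀ i j, i ≤ j → j < n → ‖w j‖ ≤ ‖w i‖)
    (hwn : w (n - 1) = 0)
    (hroots : (∑ k ∈ Finset.range n, C ((γ k : ℂ)) *
        ∏ j ∈ (Finset.range n).erase k, (X - C (z j)))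
        = ∏ j ∈ Finset.range (n - 1), (X - C (w j))) :
    ∀ k, 1 ≤ k → k ≤ n →
      ∏ j ∈ Finset.range k, ‖w j‖ ≤
        ∏ j ∈ Finset.range k, ‖z j‖ :=
  majorization_zeros_incomplete_combination_general n z w γ hγ0 hγ1 hzdesc hwn hroots
end

section
/- Let $w_1,\dots,w_{n-1}$ be the zeros of $A_n^\gamma$ in descending order of modulus, and $v_1,\dots,v_{n-1}$ the zeros of $B_n^\gamma$ in descending order (these are real and nonnegative). Then $\prod_{j=1}^k|w_j|\le \prod_{j=1}^k v_j$ for $1\le k\le n-1$. -/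
/-!
Put `u = (√γₖ)ₖ`, `P = 1 - u uᵀ`, `Z = diag(zⱼ)` and `|Z| = diag(|zⱼ|)`. Since `P` is a projection,
`charpoly (P D P) = X · ∑ₖ γₖ ∏_{j ≠ k} (X - dⱼ)` for every diagonal `D`, so the `wⱼ` (together
with `0`) are the eigenvalues of `N = P Z P`, and the `vⱼ` (together with `0`) those of the
Hermitian matrix `B = P |Z| P`.

A Schur triangulation of `N`, with the eigenvalues in the order `w₁, w₂, …`, gives an isometry `V`
with `det (Vᴴ N V) = w₁ ⋯ wₖ`. Writing `Z = S Φ S` with `S = |Z|^{1/2}` and `Φ` a unitary diagonal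
matrix, we get `Vᴴ N V = Yᴴ Φ Y` and `Vᴴ B V = Yᴴ Y` for `Y = S P V`. The Cauchy–Binet formula and
Cauchy–Schwarz then give `|det (Vᴴ N V)| ≤ det (Vᴴ B V)`. In an eigenbasis of `B`, Cauchy–Binet
writes `det (Vᴴ B V)` as a convex combination of products of `k` eigenvalues of `B`, so it is
at most `v₁ ⋯ vₖ`.
-/

open Polynomial Finset Matrix

theorem Fin.val_le_of_strictMono {k n : ℕ} {e : Fin k → Fin n} (he : StrictMono e)
    (i : Fin k) : (i : ℕ) ≤ e i := by
  obtain ⟨i, hi⟩ := i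
  induction i with
  | zero => exact Nat.zero_le _
  | succ i ih =>
    have hle : i ≤ e ⟨i, _⟩ := ih (by omega)
    exact hle.trans_lt (Fin.lt_def.mp (he (Nat.lt_succ_self i)))

theorem Fin.prod_orderEmbedding_le_prod_castLE {k n : ℕ} (hk : k ≤ n) {β : Fin n → ℝ}
    (hβ : Antitone β) (hβ0 : ∀ i, 0 ≤ β i) (e : Fin k ↪o Fin n) :
    ∏ i, β (e i) ≤ ∏ i, β (Fin.castLE hk i) :=
  prod_le_prod (fun _ _ => hβ0 _) fun i _ => hβ (Fin.val_le_of_strictMono e.strictMono i)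

theorem Fin.antitone_snoc {α : Type*} [Preorder α] {n : ℕ} {f : Fin n → α} {a : α}
    (hf : Antitone f) (ha : ∀ i, a ≤ f i) : Antitone (Fin.snoc f a : Fin (n + 1) → α) := by
  intro i j hij
  induction j using Fin.lastCases with
  | last => induction i using Fin.lastCases <;> simp [ha]
  | cast j =>
    induction i using Fin.lastCases with
    | last => exact absurd hij (Fin.castSucc_lt_last j).not_ge
    | cast i => simpa using hf (Fin.castSucc_le_castSucc_iff.mp hij)

theorem Fin.snoc_castLE_succ {α : Type*} {m k : ℕ} (hk : k ≤ m) (f : Fin m → α) (a : α)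
    (i : Fin k) : (Fin.snoc f a : Fin (m + 1) → α) (Fin.castLE hk.step i) = f (Fin.castLE hk i) :=
  Fin.snoc_castSucc (α := fun _ => α) a f (Fin.castLE hk i)

theorem Polynomial.prod_X_sub_C_snoc_zero {R : Type*} [CommRing R] {m : ℕ} (r : ℕ → R) :
    ∏ i, (X - C ((Fin.snoc (fun j : Fin m => r j) 0 : Fin (m + 1) → R) i)) =
      X * ∏ j ∈ range m, (X - C (r j)) := by
  rw [Fin.prod_univ_castSucc, mul_comm]
  simp [Fin.prod_univ_eq_prod_range (fun j => X - C (r j))]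

theorem Matrix.charpoly_projection_mul_diagonal_mul_projection {K ι : Type*} [Field K]
    [Infinite K] [Fintype ι] [DecidableEq ι] (u d : ι → K) (hu : u ⬝ᵥ u = 1) :
    ((1 - vecMulVec u u) * diagonal d * (1 - vecMulVec u u)).charpoly =
      X * ∑ i, C (u i ^ 2) * ∏ j ∈ univ.erase i, (X - C (d j)) := by
  -- `P = 1 - u uᵀ` is idempotent, so the charpoly is that of `diagonal d * P`, a rank-one
  -- perturbation of `diagonal d`; compare values off the finite set `range d`.
  have hidem : (1 - vecMulVec u u) * (1 - vecMulVec u u) = 1 - vecMulVec u u := by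
    simp [Matrix.sub_mul, Matrix.mul_sub, vecMulVec_mul_vecMulVec, hu]
  have hrank1 : diagonal d * (1 - vecMulVec u u) =
      diagonal d - replicateCol Unit (d * u) * replicateRow Unit u := by
    rw [Matrix.mul_sub, Matrix.mul_one, ← vecMulVec_eq Unit]
    ext i j
    simp [vecMulVec_apply, mul_assoc]
  rw [Matrix.mul_assoc, charpoly_mul_comm, Matrix.mul_assoc, hidem, hrank1]
  refine eq_of_infinite_eval_eq _ _ ((Set.finite_range d).infinite_compl.mono fun x hx => ?_)
  have hxd : ∀ i, x - d i ≠ 0 := fun i h => hx ⟨i, (sub_eq_zero.mp h).symm⟩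
  have hdiag : scalar ι x - (diagonal d - replicateCol Unit (d * u) * replicateRow Unit u) =
      diagonal (fun i => x - d i) + replicateCol Unit (d * u) * replicateRow Unit u := by
    rw [scalar_apply, ← sub_add, diagonal_sub]
  have hinv : (diagonal fun i => x - d i)⁻¹ = diagonal fun i => (x - d i)⁻¹ :=
    inv_eq_left_inv (by simp [diagonal_mul_diagonal, hxd])
  simp only [Set.mem_ofPred_eq, eval_charpoly, hdiag]
  rw [det_add_replicateCol_mul_replicateRow (by simp [det_diagonal, prod_ne_zero_iff, hxd]), hinv]
  simp only [det_diagonal, eval_mul, eval_X, eval_finsetSum, eval_C, eval_prod, eval_sub]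
  simp [mul_apply, replicateRow, replicateCol, diagonal_apply]
  rw [← hu, dotProduct, ← sum_add_distrib, mul_sum, mul_sum]
  refine sum_congr rfl fun i _ => ?_
  rw [← mul_prod_erase univ (fun j => x - d j) (mem_univ i)]
  field_simp [hxd i]
  ring

section CauchyBinet

abbrev Matrix.submatrixRows {R ι : Type*} [LinearOrder ι] {k : ℕ} (X : Matrix ι (Fin k) R)
    (s : Set.powersetCard ι k) : Matrix (Fin k) (Fin k) R :=
  X.submatrix (Set.powersetCard.ofFinEmbEquiv.symm s) id

theorem Matrix.det_transpose_mul_eq_sum {R ι : Type*} [CommRing R] [Fintype ι] [LinearOrder ι]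
    {k : ℕ} (X Y : Matrix ι (Fin k) R) :
    (Xᵀ * Y).det = ∑ s, (X.submatrixRows s).det * (Y.submatrixRows s).det := by
  -- Expand the wedge of the columns of `Y` in the standard basis of `⋀ᵏ (ι → R)` and pair it
  -- with the wedge of the columns of `X`, read as linear forms.
  let b := Pi.basisFun R ι
  let φ := exteriorPower.pairingDual R (ι → R) k
    (exteriorPower.ιMulti R k fun j => Fintype.linearCombination R fun i => X i j)
  have h := congrArg φ ((b.exteriorPower k).sum_repr (exteriorPower.ιMulti R k fun j i => Y i j))
  rw [map_sum] at h
  rw [← det_transpose]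
  convert h.symm using 1
  · simp only [φ, exteriorPower.pairingDual_ιMulti_ιMulti, Fintype.linearCombination_apply]
    congr 1
    ext i j
    simp [Matrix.mul_apply, mul_comm]
  · refine sum_congr rfl fun s _ => ?_
    rw [map_smul, smul_eq_mul, mul_comm, exteriorPower.basis_repr_apply,
      exteriorPower.basis_apply]
    simp only [φ, exteriorPower.ιMulti_family, b, exteriorPower.ιMultiDual_apply_ιMulti,
      exteriorPower.pairingDual_ιMulti_ιMulti, Fintype.linearCombination_apply]
    rw [← det_transpose (Y.submatrix _ id)]
    simp only [transpose_submatrix, Module.Basis.coord_apply, Pi.basisFun_repr,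
      Function.comp_apply, Pi.basisFun_apply, Pi.single_apply, smul_eq_mul, ite_mul, one_mul,
      zero_mul, sum_ite_eq', mem_univ, ↓reduceIte]
    rfl

variable {𝕜 : Type*} [RCLike 𝕜] {k : ℕ}

theorem Matrix.det_conjTranspose_mul_eq_sum {ι : Type*} [Fintype ι] [LinearOrder ι]
    (X Y : Matrix ι (Fin k) 𝕜) :
    (Xᴴ * Y).det = ∑ s, star (X.submatrixRows s).det * (Y.submatrixRows s).det := by
  rw [conjTranspose, transpose_map, det_transpose_mul_eq_sum]
  refine sum_congr rfl fun s _ => ?_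
  rw [← det_transpose (X.submatrixRows s), ← det_conjTranspose]
  rfl

theorem Matrix.det_conjTranspose_mul_self_eq_sum {ι : Type*} [Fintype ι] [LinearOrder ι]
    (X : Matrix ι (Fin k) 𝕜) :
    (Xᴴ * X).det = ((∑ s, ‖(X.submatrixRows s).det‖ ^ 2 : ℝ) : 𝕜) := by
  simp [det_conjTranspose_mul_eq_sum, RCLike.conj_mul]

theorem Matrix.norm_det_conjTranspose_mul_sq_le {ι : Type*} [Fintype ι]
    (X Y : Matrix ι (Fin k) 𝕜) :
    ‖(Xᴴ * Y).det‖ ^ 2 ≤ ‖(Xᴴ * X).det‖ * ‖(Yᴴ * Y).det‖ := by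
  let := LinearOrder.lift' _ (Fintype.equivFin ι).injective
  rw [det_conjTranspose_mul_self_eq_sum, det_conjTranspose_mul_self_eq_sum, RCLike.norm_ofReal,
    RCLike.norm_ofReal, abs_of_nonneg (by positivity), abs_of_nonneg (by positivity),
    det_conjTranspose_mul_eq_sum]
  calc ‖∑ s, star (X.submatrixRows s).det * (Y.submatrixRows s).det‖ ^ 2
      ≤ (∑ s, ‖(X.submatrixRows s).det‖ * ‖(Y.submatrixRows s).det‖) ^ 2 := by
        gcongr
        exact (norm_sum_le _ _).trans_eq (by simp)
    _ ≤ _ := sum_mul_sq_le_sq_mul_sq _ _ _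

end CauchyBinet

section Schur

variable {𝕜 : Type*} [RCLike 𝕜]

theorem Matrix.charpoly_eq_X_sub_C_mul_of_col_zero {R : Type*} [CommRing R] {m : ℕ}
    (M : Matrix (Fin (m + 1)) (Fin (m + 1)) R) (h : ∀ i : Fin m, M i.succ 0 = 0) :
    M.charpoly = (X - C (M 0 0)) * (M.submatrix Fin.succ Fin.succ).charpoly := by
  have hsub : (charmatrix M).submatrix Fin.succ Fin.succ =
      charmatrix (M.submatrix Fin.succ Fin.succ) := by
    ext i j
    by_cases hij : i = j <;> simp [hij]
  rw [charpoly, det_succ_column_zero, Fin.sum_univ_succ, sum_eq_zero, add_zero]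
  · simp [← hsub, charpoly]
  · intro i _
    simp [h]

theorem Matrix.charpoly_star_mul_mul_of_mem_unitaryGroup {n : ℕ} (A : Matrix (Fin n) (Fin n) 𝕜)
    {U : Matrix (Fin n) (Fin n) 𝕜} (hU : U ∈ unitaryGroup (Fin n) 𝕜) :
    (star U * A * U).charpoly = A.charpoly := by
  rw [charpoly_mul_comm, ← Matrix.mul_assoc, Unitary.mul_star_self_of_mem hU, Matrix.one_mul]

theorem Matrix.exists_mulVec_eq_smul_of_charpoly_eq_prod {K : Type*} [Field K] {n : ℕ}
    {A : Matrix (Fin n) (Fin n) K} {μ : Fin n → K} (hA : A.charpoly = ∏ i, (X - C (μ i)))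
    (i : Fin n) : ∃ v ≠ 0, A *ᵥ v = μ i • v := by
  have hdet : (scalar (Fin n) (μ i) - A).det = 0 := by
    rw [← eval_charpoly, hA, eval_prod]
    exact prod_eq_zero (mem_univ i) (by simp)
  obtain ⟨v, hv, hAv⟩ := exists_mulVec_eq_zero_iff.mpr hdet
  refine ⟨v, hv, ?_⟩
  rw [sub_mulVec, sub_eq_zero] at hAv
  simpa using hAv.symm

theorem Matrix.exists_mem_unitaryGroup_col_zero_eq {m : ℕ} (x : EuclideanSpace 𝕜 (Fin (m + 1)))
    (hx : ‖x‖ = 1) : ∃ U ∈ unitaryGroup (Fin (m + 1)) 𝕜, ∀ i, U i 0 = x i := by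
  have hortho : Orthonormal 𝕜 (({0} : Set (Fin (m + 1))).domRestrict fun _ => x) := by
    refine ⟨fun _ => hx, ?_⟩
    rintro ⟨i, rfl⟩ ⟨j, rfl⟩ hij
    exact absurd rfl hij
  obtain ⟨b, hb⟩ := hortho.exists_orthonormalBasis_extension_of_card_eq (by simp)
  refine ⟨(EuclideanSpace.basisFun _ 𝕜).toBasis.toMatrix b,
    (EuclideanSpace.basisFun _ 𝕜).toMatrix_orthonormalBasis_mem_unitary b, fun i => ?_⟩
  simp [Module.Basis.toMatrix_apply, hb 0 rfl]

theorem Matrix.exists_unitary_isUpperTriangular_of_col_zero {m : ℕ}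
    (M : Matrix (Fin (m + 1)) (Fin (m + 1)) 𝕜) (h : ∀ i : Fin m, M i.succ 0 = 0)
    {U : Matrix (Fin m) (Fin m) 𝕜} (hU : U ∈ unitaryGroup (Fin m) 𝕜)
    (hT : (star U * M.submatrix Fin.succ Fin.succ * U).IsUpperTriangular) :
    ∃ W ∈ unitaryGroup (Fin (m + 1)) 𝕜, (star W * M * W).IsUpperTriangular ∧
      (star W * M * W).diag =
        Fin.cons (M 0 0) (star U * M.submatrix Fin.succ Fin.succ * U).diag := by
  -- the block matrix `W = diag(1, U)`
  let W : Matrix (Fin (m + 1)) (Fin (m + 1)) 𝕜 :=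
    of (Fin.cons (Pi.single 0 1) fun i => Fin.cons 0 (U i))
  have hconj (N : Matrix (Fin (m + 1)) (Fin (m + 1)) 𝕜) (i j : Fin (m + 1)) :
      (star W * N * W) i j = ∑ a, ∑ b, star (W a i) * N a b * W b j := by
    simp only [mul_apply, star_apply, sum_mul]
    rw [sum_comm]
  have hconj00 (N : Matrix (Fin (m + 1)) (Fin (m + 1)) 𝕜) : (star W * N * W) 0 0 = N 0 0 := by
    simp [hconj, Fin.sum_univ_succ, W]
  have hconjss (N : Matrix (Fin (m + 1)) (Fin (m + 1)) 𝕜) (i j : Fin m) :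
      (star W * N * W) i.succ j.succ = (star U * N.submatrix Fin.succ Fin.succ * U) i j := by
    simp [hconj, Fin.sum_univ_succ, W, mul_apply, sum_mul]
    exact sum_comm
  have hWW : star W * W = 1 := by
    ext i j
    cases i using Fin.cases <;> cases j using Fin.cases
    case succ.succ i j =>
      rw [← Matrix.mul_one (star W), hconjss, submatrix_one _ (Fin.succ_injective m),
        Matrix.mul_one, Unitary.star_mul_self_of_mem hU]
      simp [one_apply]
    all_goals simp [mul_apply, Fin.sum_univ_succ, W, Ne.symm (Fin.succ_ne_zero _)]
  refine ⟨W, mem_unitaryGroup_iff'.mpr hWW, ?_, ?_⟩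
  · intro i j hij
    cases i using Fin.cases with
    | zero => exact absurd hij (Fin.not_lt_zero j)
    | succ i =>
      cases j using Fin.cases with
      | zero => simp [hconj, Fin.sum_univ_succ, W, h]
      | succ j => rw [hconjss]; exact hT (Fin.succ_lt_succ_iff.mp hij)
  · ext i
    cases i using Fin.cases with
    | zero => simp [hconj00]
    | succ i => simp [hconjss]

theorem Matrix.schur_triangulation : ∀ {n : ℕ} (A : Matrix (Fin n) (Fin n) 𝕜) (μ : Fin n → 𝕜),
    A.charpoly = ∏ i, (X - C (μ i)) →
    ∃ U ∈ unitaryGroup (Fin n) 𝕜, (star U * A * U).IsUpperTriangular ∧ (star U * A * U).diag = μ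
  | 0, _, _, _ => ⟨1, one_mem _, fun i => i.elim0, funext fun i => i.elim0⟩
  | m + 1, A, μ, hA => by
    obtain ⟨v, hv, hAv⟩ := exists_mulVec_eq_smul_of_charpoly_eq_prod hA 0
    let x : EuclideanSpace 𝕜 (Fin (m + 1)) := (‖WithLp.toLp 2 v‖⁻¹ : 𝕜) • WithLp.toLp 2 v
    obtain ⟨U₁, hU₁, hcol⟩ :=
      exists_mem_unitaryGroup_col_zero_eq x (norm_smul_inv_norm (by simpa using hv))
    set M := star U₁ * A * U₁ with hMdef
    have hUe : U₁ *ᵥ Pi.single 0 1 = x.ofLp := by ext i; simp [hcol]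
    have hAx : A *ᵥ x.ofLp = μ 0 • x.ofLp := by
      simp only [x, WithLp.ofLp_smul, mulVec_smul, hAv, smul_comm (μ 0)]
    have hMcol : M *ᵥ Pi.single 0 1 = μ 0 • Pi.single 0 1 := by
      rw [hMdef, ← mulVec_mulVec, ← mulVec_mulVec, hUe, hAx, mulVec_smul, ← hUe, mulVec_mulVec,
        Unitary.star_mul_self_of_mem hU₁, one_mulVec]
    have hM0 : M 0 0 = μ 0 := by simpa using congrFun hMcol 0
    have hMs : ∀ i : Fin m, M i.succ 0 = 0 := fun i => by simpa using congrFun hMcol i.succ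
    have hM' : (M.submatrix Fin.succ Fin.succ).charpoly = ∏ i : Fin m, (X - C (μ i.succ)) := by
      have h := charpoly_eq_X_sub_C_mul_of_col_zero M hMs
      rw [charpoly_star_mul_mul_of_mem_unitaryGroup A hU₁, hA, Fin.prod_univ_succ, hM0] at h
      exact (mul_left_cancel₀ (X_sub_C_ne_zero _) h).symm
    obtain ⟨U', hU', hT, hd⟩ := schur_triangulation _ _ hM'
    obtain ⟨W, hW, hWT, hWd⟩ := exists_unitary_isUpperTriangular_of_col_zero M hMs hU' hT
    have hconj : star (U₁ * W) * A * (U₁ * W) = star W * M * W := by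
      simp only [star_mul, hMdef, Matrix.mul_assoc]
    refine ⟨U₁ * W, mul_mem hU₁ hW, hconj ▸ hWT, ?_⟩
    rw [hconj, hWd, hd, hM0]
    exact Fin.cons_self_tail μ

theorem Matrix.IsHermitian.eq_diagonal_of_isUpperTriangular {ι : Type*} [LinearOrder ι]
    {M : Matrix ι ι 𝕜} (hM : M.IsHermitian) (hT : M.IsUpperTriangular) :
    M = diagonal M.diag := by
  ext i j
  rcases lt_trichotomy i j with hij | rfl | hij
  · rw [← hM.apply i j, hT hij, star_zero, diagonal_apply_ne _ hij.ne]
  · simp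
  · rw [hT hij, diagonal_apply_ne _ hij.ne']

end Schur

section Compression

variable {𝕜 : Type*} [RCLike 𝕜]

theorem Matrix.exists_isometry_det_conjTranspose_mul_mul_eq_prod {n k : ℕ} (hk : k ≤ n)
    {A : Matrix (Fin n) (Fin n) 𝕜} {μ : Fin n → 𝕜} (hA : A.charpoly = ∏ i, (X - C (μ i))) :
    ∃ V : Matrix (Fin n) (Fin k) 𝕜, Vᴴ * V = 1 ∧ (Vᴴ * A * V).det = ∏ i, μ (Fin.castLE hk i) := by
  obtain ⟨U, hU, hT, hd⟩ := schur_triangulation A μ hA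
  have hsub (M : Matrix (Fin n) (Fin n) 𝕜) :
      (U.submatrix id (Fin.castLE hk))ᴴ * M * U.submatrix id (Fin.castLE hk) =
        (star U * M * U).submatrix (Fin.castLE hk) (Fin.castLE hk) := by
    rw [conjTranspose_submatrix, ← star_eq_conjTranspose,
      submatrix_mul _ _ _ _ _ Function.bijective_id, ← submatrix_id_id M,
      submatrix_mul _ _ _ _ _ Function.bijective_id]
    simp
  refine ⟨U.submatrix id (Fin.castLE hk), ?_, ?_⟩
  · simpa [Unitary.star_mul_self_of_mem hU, submatrix_one _ (Fin.castLE_injective hk)] using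
      hsub 1
  · have hT' : ((star U * A * U).submatrix (Fin.castLE hk) (Fin.castLE hk)).IsUpperTriangular :=
      fun i j hij => hT (Fin.strictMono_castLE hk hij)
    rw [hsub, det_of_isUpperTriangular hT']
    exact prod_congr rfl fun i _ => congrFun hd _

theorem Matrix.norm_det_conjTranspose_mul_diagonal_mul_le_prod {n k : ℕ} (hk : k ≤ n)
    {T : Matrix (Fin n) (Fin k) 𝕜} (hT : Tᴴ * T = 1) {β : Fin n → ℝ} (hβ : Antitone β)
    (hβ0 : ∀ i, 0 ≤ β i) :
    ‖(Tᴴ * diagonal (fun i => (β i : 𝕜)) * T).det‖ ≤ ∏ i, β (Fin.castLE hk i) := by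
  let e (s : Set.powersetCard (Fin n) k) := Set.powersetCard.ofFinEmbEquiv.symm s
  have hdet : (Tᴴ * diagonal (fun i => (β i : 𝕜)) * T).det =
      ∑ s, (((∏ i, β (e s i)) * ‖(T.submatrixRows s).det‖ ^ 2 : ℝ) : 𝕜) := by
    rw [Matrix.mul_assoc, det_conjTranspose_mul_eq_sum]
    refine sum_congr rfl fun s _ => ?_
    have hrows : (diagonal (fun i => (β i : 𝕜)) * T).submatrixRows s =
        diagonal (fun i => (β (e s i) : 𝕜)) * T.submatrixRows s := by
      ext i j
      simp [diagonal_mul, e]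
    rw [hrows, det_mul, det_diagonal, mul_left_comm, RCLike.star_def, RCLike.conj_mul]
    push_cast
    ring
  have hsum : ∑ s, ‖(T.submatrixRows s).det‖ ^ 2 = 1 := by
    have h := det_conjTranspose_mul_self_eq_sum T
    rw [hT, det_one] at h
    exact_mod_cast h.symm
  rw [hdet, ← RCLike.ofReal_sum, RCLike.norm_ofReal, abs_of_nonneg
    (sum_nonneg fun s _ => mul_nonneg (prod_nonneg fun i _ => hβ0 _) (by positivity))]
  calc ∑ s, (∏ i, β (e s i)) * ‖(T.submatrixRows s).det‖ ^ 2
      ≤ ∑ s, (∏ i, β (Fin.castLE hk i)) * ‖(T.submatrixRows s).det‖ ^ 2 :=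
        sum_le_sum fun s _ => mul_le_mul_of_nonneg_right
          (Fin.prod_orderEmbedding_le_prod_castLE hk hβ hβ0 _) (by positivity)
    _ = ∏ i, β (Fin.castLE hk i) := by rw [← mul_sum, hsum, mul_one]

theorem Matrix.IsHermitian.norm_det_conjTranspose_mul_mul_le_prod {n k : ℕ} (hk : k ≤ n)
    {B : Matrix (Fin n) (Fin n) 𝕜} (hB : B.IsHermitian) {β : Fin n → ℝ} (hβ : Antitone β)
    (hβ0 : ∀ i, 0 ≤ β i) (hBβ : B.charpoly = ∏ i, (X - C (β i : 𝕜)))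
    {V : Matrix (Fin n) (Fin k) 𝕜} (hV : Vᴴ * V = 1) :
    ‖(Vᴴ * B * V).det‖ ≤ ∏ i, β (Fin.castLE hk i) := by
  obtain ⟨U, hU, hT, hd⟩ := schur_triangulation B _ hBβ
  have hD : star U * B * U = diagonal fun i => (β i : 𝕜) := by
    rw [star_eq_conjTranspose] at hd hT ⊢
    rw [(isHermitian_conjTranspose_mul_mul U hB).eq_diagonal_of_isUpperTriangular hT, hd]
  have hUU : U * Uᴴ = 1 := Unitary.mul_star_self_of_mem hU
  have hconj : Vᴴ * B * V = (Uᴴ * V)ᴴ * diagonal (fun i => (β i : 𝕜)) * (Uᴴ * V) := by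
    rw [← hD, conjTranspose_mul, star_eq_conjTranspose, conjTranspose_conjTranspose]
    simp only [Matrix.mul_assoc]
    rw [← Matrix.mul_assoc U Uᴴ V, hUU, Matrix.one_mul, ← Matrix.mul_assoc U Uᴴ, hUU,
      Matrix.one_mul]
  rw [hconj]
  refine norm_det_conjTranspose_mul_diagonal_mul_le_prod hk ?_ hβ hβ0
  rw [conjTranspose_mul, conjTranspose_conjTranspose, Matrix.mul_assoc, ← Matrix.mul_assoc U,
    hUU, Matrix.one_mul, hV]

theorem Matrix.norm_det_conjTranspose_mul_diagonal_mul_le_diagonal_norm {ι : Type*} [Fintype ι]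
    [DecidableEq ι] {k : ℕ} (Y : Matrix ι (Fin k) 𝕜) (z : ι → 𝕜) :
    ‖(Yᴴ * diagonal z * Y).det‖ ≤ ‖(Yᴴ * diagonal (fun i => (‖z i‖ : 𝕜)) * Y).det‖ := by
  choose c hc1 hcz using fun i => RCLike.exists_norm_mul_eq_self (z i)
  let s : ι → 𝕜 := fun i => (√‖z i‖ : ℝ)
  have hss (i : ι) : s i * s i = ‖z i‖ := by
    rw [← RCLike.ofReal_mul, Real.mul_self_sqrt (norm_nonneg _)]
  have hscs (i : ι) : s i * (c i * s i) = z i := by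
    rw [mul_left_comm, hss, hcz]
  have hcc (i : ι) : star (c i) * c i = 1 := by
    simp [RCLike.star_def, RCLike.conj_mul, hc1]
  have hsH : (diagonal s)ᴴ = diagonal s := by
    rw [diagonal_conjTranspose]
    congr 1
    ext i
    simp [s]
  set X := diagonal s * Y
  have hN : Yᴴ * diagonal z * Y = Xᴴ * (diagonal c * X) := by
    have hz : diagonal z = diagonal s * (diagonal c * diagonal s) := by
      simp [diagonal_mul_diagonal, hscs]
    simp only [hz, X, conjTranspose_mul, hsH, Matrix.mul_assoc]
  have hB : Yᴴ * diagonal (fun i => (‖z i‖ : 𝕜)) * Y = Xᴴ * X := by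
    have hz : diagonal (fun i => (‖z i‖ : 𝕜)) = diagonal s * diagonal s := by
      simp [diagonal_mul_diagonal, hss]
    simp only [hz, X, conjTranspose_mul, hsH, Matrix.mul_assoc]
  have hcX : (diagonal c * X)ᴴ * (diagonal c * X) = Xᴴ * X := by
    have hc : (diagonal c)ᴴ * diagonal c = 1 := by
      rw [diagonal_conjTranspose, diagonal_mul_diagonal, ← diagonal_one]
      exact congrArg diagonal (funext hcc)
    rw [conjTranspose_mul, Matrix.mul_assoc, ← Matrix.mul_assoc (diagonal c)ᴴ, hc,
      Matrix.one_mul]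
  have hCS := norm_det_conjTranspose_mul_sq_le X (diagonal c * X)
  rw [hcX, ← sq] at hCS
  rw [hN, hB]
  exact (pow_le_pow_iff_left₀ (norm_nonneg _) (norm_nonneg _) two_ne_zero).mp hCS

theorem Matrix.norm_det_compression_diagonal_le_diagonal_norm {ι : Type*} [Fintype ι]
    [DecidableEq ι] {k : ℕ} {P : Matrix ι ι 𝕜} (hP : Pᴴ = P) (V : Matrix ι (Fin k) 𝕜)
    (z : ι → 𝕜) :
    ‖(Vᴴ * (P * diagonal z * P) * V).det‖ ≤
      ‖(Vᴴ * (P * diagonal (fun i => (‖z i‖ : 𝕜)) * P) * V).det‖ := by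
  have h := norm_det_conjTranspose_mul_diagonal_mul_le_diagonal_norm (P * V) z
  simp only [conjTranspose_mul, hP, Matrix.mul_assoc] at h ⊢
  exact h

end Compression

noncomputable def sqrtWeightProjection (γ : ℕ → ℝ) (n : ℕ) : Matrix (Fin n) (Fin n) ℂ :=
  1 - vecMulVec (fun j : Fin n => (√(γ j) : ℂ)) (fun j : Fin n => (√(γ j) : ℂ))

theorem sqrtWeightProjection_conjTranspose (γ : ℕ → ℝ) (n : ℕ) :
    (sqrtWeightProjection γ n)ᴴ = sqrtWeightProjection γ n := by
  simp [sqrtWeightProjection, Pi.star_def]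

theorem charpoly_sqrtWeightProjection_mul_diagonal_mul {m : ℕ} {γ : ℕ → ℝ}
    (hγ0 : ∀ k ∈ range (m + 1), 0 ≤ γ k) (hγ1 : ∑ k ∈ range (m + 1), γ k = 1) (d r : ℕ → ℂ)
    (h : ∑ k ∈ range (m + 1), C (γ k : ℂ) * ∏ j ∈ (range (m + 1)).erase k, (X - C (d j)) =
      ∏ j ∈ range m, (X - C (r j))) :
    (sqrtWeightProjection γ (m + 1) * diagonal (fun j : Fin (m + 1) => d j) *
      sqrtWeightProjection γ (m + 1)).charpoly =
      ∏ i, (X - C ((Fin.snoc (fun j : Fin m => r j) 0 : Fin (m + 1) → ℂ) i)) := by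
  have hsq (j : Fin (m + 1)) : (√(γ j) : ℂ) ^ 2 = γ j := by
    rw [← Complex.ofReal_pow, Real.sq_sqrt (hγ0 j (mem_range.mpr j.isLt))]
  have hu : (fun j : Fin (m + 1) => (√(γ j) : ℂ)) ⬝ᵥ (fun j => (√(γ j) : ℂ)) = 1 := by
    simp only [dotProduct, ← sq, hsq]
    exact_mod_cast (Fin.sum_univ_eq_sum_range γ (m + 1)).trans hγ1
  rw [sqrtWeightProjection, charpoly_projection_mul_diagonal_mul_projection _ _ hu,
    prod_X_sub_C_snoc_zero, ← h, ← Fin.sum_univ_eq_sum_range]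
  simp only [hsq, Fin.prod_univ_erase_eq_prod_range_erase (fun j => X - C (d j))]

theorem norm_det_compression_diagonal_norm_le_prod {m k : ℕ} (hk : k ≤ m) {γ : ℕ → ℝ}
    (hγ0 : ∀ k ∈ range (m + 1), 0 ≤ γ k) (hγ1 : ∑ k ∈ range (m + 1), γ k = 1) {z : ℕ → ℂ}
    {v : ℕ → ℝ} (hv0 : ∀ j ∈ range m, 0 ≤ v j) (hvdesc : ∀ i j, i ≤ j → j < m → v j ≤ v i)
    (hvroots : ∑ k ∈ range (m + 1), C (γ k : ℂ) *
      ∏ j ∈ (range (m + 1)).erase k, (X - C (‖z j‖ : ℂ)) = ∏ j ∈ range m, (X - C (v j : ℂ)))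
    {V : Matrix (Fin (m + 1)) (Fin k) ℂ} (hV : Vᴴ * V = 1) :
    ‖(Vᴴ * (sqrtWeightProjection γ (m + 1) * diagonal (fun j : Fin (m + 1) => (‖z j‖ : ℂ)) *
      sqrtWeightProjection γ (m + 1)) * V).det‖ ≤ ∏ j ∈ range k, v j := by
  let β : Fin (m + 1) → ℝ := Fin.snoc (fun j : Fin m => v j) 0
  have hβ : Antitone β := Fin.antitone_snoc (fun i j hij => hvdesc i j hij j.isLt)
    fun j => hv0 j (mem_range.mpr j.isLt)
  have hβ0 (i : Fin (m + 1)) : 0 ≤ β i := (hβ (Fin.le_last i)).trans_eq' (by simp [β])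
  have hB := charpoly_sqrtWeightProjection_mul_diagonal_mul hγ0 hγ1 _ _ hvroots
  rw [show (Fin.snoc (fun j : Fin m => (v j : ℂ)) 0 : Fin (m + 1) → ℂ) = fun i => (β i : ℂ) by
    ext i; induction i using Fin.lastCases <;> simp [β]] at hB
  have hBH := isHermitian_conjTranspose_mul_mul (sqrtWeightProjection γ (m + 1))
    (isHermitian_diagonal_iff.mpr fun i => Complex.conj_ofReal ‖z i‖)
  rw [sqrtWeightProjection_conjTranspose] at hBH
  refine (hBH.norm_det_conjTranspose_mul_mul_le_prod hk.step hβ hβ0 hB hV).trans_eq ?_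
  rw [← Fin.prod_univ_eq_prod_range]
  exact prod_congr rfl fun i _ => Fin.snoc_castLE_succ hk _ _ i

theorem majorization_zeros_vs_absolute_polynomial_general
    (n : ℕ) (z : ℕ → ℂ) (γ : ℕ → ℝ)
    (hγ0 : ∀ k ∈ Finset.range n, 0 ≤ γ k)
    (hγ1 : ∑ k ∈ Finset.range n, γ k = 1)
    (w : ℕ → ℂ) (v : ℕ → ℝ)
    (hwroots : (∑ k ∈ Finset.range n, C ((γ k : ℂ)) *
        ∏ j ∈ (Finset.range n).erase k, (X - C (z j)))
        = ∏ j ∈ Finset.range (n - 1), (X - C (w j)))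
    -- v lists the zeros of Bₙ^γ in descending order; these are real and nonnegative
    (hv0 : ∀ j ∈ Finset.range (n - 1), 0 ≤ v j)
    (hvdesc : ∀ i j, i ≤ j → j < n - 1 → v j ≤ v i)
    (hvroots : (∑ k ∈ Finset.range n, C ((γ k : ℂ)) *
        ∏ j ∈ (Finset.range n).erase k, (X - C ((‖z j‖ : ℂ))))
        = ∏ j ∈ Finset.range (n - 1), (X - C ((v j : ℂ)))) :
    ∀ k, 1 ≤ k → k ≤ n - 1 →
      ∏ j ∈ Finset.range k, ‖w j‖ ≤ ∏ j ∈ Finset.range k, v j := by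
  intro k hk1 hkn
  obtain ⟨m, rfl⟩ : ∃ m, n = m + 1 := ⟨n - 1, by omega⟩
  rw [Nat.add_sub_cancel] at hkn hwroots hv0 hvdesc hvroots
  obtain ⟨V, hV, hdet⟩ := exists_isometry_det_conjTranspose_mul_mul_eq_prod hkn.step
    (charpoly_sqrtWeightProjection_mul_diagonal_mul hγ0 hγ1 _ _ hwroots)
  calc ∏ j ∈ range k, ‖w j‖
      = ‖(Vᴴ * (sqrtWeightProjection γ (m + 1) * diagonal (fun j : Fin (m + 1) => z j) *
          sqrtWeightProjection γ (m + 1)) * V).det‖ := by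
        rw [hdet, norm_prod, ← Fin.prod_univ_eq_prod_range]
        exact prod_congr rfl fun i _ => by rw [Fin.snoc_castLE_succ hkn]; rfl
    _ ≤ _ :=
        norm_det_compression_diagonal_le_diagonal_norm (sqrtWeightProjection_conjTranspose γ _) V _
    _ ≤ ∏ j ∈ range k, v j :=
        norm_det_compression_diagonal_norm_le_prod hkn hγ0 hγ1 hv0 hvdesc hvroots hV

theorem majorization_zeros_vs_absolute_polynomial
    (n : ℕ) (hn : 2 ≤ n) (z : ℕ → ℂ) (γ : ℕ → ℝ)
    (hγ0 : ∀ k ∈ Finset.range n, 0 ≤ γ k)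
    (hγ1 : ∑ k ∈ Finset.range n, γ k = 1)
    (w : ℕ → ℂ) (v : ℕ → ℝ)
    -- w lists the zeros of Aₙ^γ in descending order of modulus
    (hwdesc : ∀ i j, i ≤ j → j < n - 1 → ‖w j‖ ≤ ‖w i‖)
    (hwroots : (∑ k ∈ Finset.range n, C ((γ k : ℂ)) *
        ∏ j ∈ (Finset.range n).erase k, (X - C (z j)))
        = ∏ j ∈ Finset.range (n - 1), (X - C (w j)))
    -- v lists the zeros of Bₙ^γ in descending order; these are real and nonnegative
    (hv0 : ∀ j ∈ Finset.range (n - 1), 0 ≤ v j)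
    (hvdesc : ∀ i j, i ≤ j → j < n - 1 → v j ≤ v i)
    (hvroots : (∑ k ∈ Finset.range n, C ((γ k : ℂ)) *
        ∏ j ∈ (Finset.range n).erase k, (X - C ((‖z j‖ : ℂ))))
        = ∏ j ∈ Finset.range (n - 1), (X - C ((v j : ℂ)))) :
    ∀ k, 1 ≤ k → k ≤ n - 1 →
      ∏ j ∈ Finset.range k, ‖w j‖ ≤ ∏ j ∈ Finset.range k, v j :=
  majorization_zeros_vs_absolute_polynomial_general n z γ hγ0 hγ1 w v hwroots hv0 hvdesc hvroots
end

section
/- Let $A$ be an $n\times n$ complex matrix with characteristic polynomial $p(z)=\prod_{j=1}^n(z-z_j)$ and let $q$ be the monic polynomial of degree $n-1$ satisfying $q(z)/p(z)=\sum_{j=1}^n \lambda_j/(z-z_j)$ (so $\sum_j\lambda_j=1$). Then the characteristic polynomial of the matrix $D(I-\Lambda J)$ equals $z\,q(z)$, where $D=\mathrm{diag}(z_1,\dots,z_n)$, $\Lambda=\mathrm{diag}(\lambda_1,\dots,\lambda_n)$, and $J$ is the $n\times n$ all-ones matrix. -/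
open Polynomial Finset Matrix

/-- Determinant of a diagonal matrix plus a rank-one matrix whose rows are constant,
over a field, assuming the diagonal entries are nonzero. -/
lemma det_diag_add_const_rows {K : Type*} [Field K] {n : ℕ} (d c : Fin n → K)
    (hd : ∀ i, d i ≠ 0) :
    Matrix.det (Matrix.of fun i j => (if i = j then d i else 0) + c i)
      = ∏ i, d i + ∑ j, c j * ∏ i ∈ Finset.univ.erase j, d i := by
  have hM : (Matrix.of fun i j => (if i = j then d i else 0) + c i)
      = Matrix.diagonal d *
        (1 + Matrix.replicateCol Unit (fun i => c i / d i) * Matrix.replicateRow Unit (fun _ => (1 : K))) := by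
    ext i j
    rw [Matrix.diagonal_mul]
    simp only [Matrix.of_apply, Matrix.add_apply, Matrix.mul_apply, Fintype.sum_unique,
      Matrix.replicateCol_apply, Matrix.replicateRow_apply, Matrix.one_apply, mul_one]
    rcases eq_or_ne i j with rfl | h
    · simp [mul_add, mul_div_cancel₀ _ (hd i)]
    · simp [h, mul_add, mul_div_cancel₀ _ (hd i)]
  rw [hM, Matrix.det_mul, Matrix.det_diagonal, Matrix.det_one_add_replicateCol_mul_replicateRow]
  rw [mul_add, mul_one, dotProduct, Finset.mul_sum]
  congr 1
  refine Finset.sum_congr rfl fun j _ => ?_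
  have h := hd j
  rw [← Finset.mul_prod_erase Finset.univ d (Finset.mem_univ j)]
  field_simp

theorem charpoly_D_companion
    (n : ℕ) (z lam : Fin n → ℂ)
    (hlam : ∑ j, lam j = 1)
    (A : Matrix (Fin n) (Fin n) ℂ)
    (hA : A.charpoly = ∏ j, (X - C (z j))) :
    (Matrix.diagonal z *
        (1 - Matrix.diagonal lam * Matrix.of (fun _ _ : Fin n => (1 : ℂ)))).charpoly
      = X * ∑ j, C (lam j) * ∏ i ∈ Finset.univ.erase j, (X - C (z i)) := by
  set M := Matrix.diagonal z *
      (1 - Matrix.diagonal lam * Matrix.of (fun _ _ : Fin n => (1 : ℂ))) with hMdef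
  have hMentry : ∀ i j, M i j = z i * ((if i = j then (1:ℂ) else 0) - lam i) := by
    intro i j
    simp [hMdef, Matrix.diagonal_mul, Matrix.sub_apply, Matrix.one_apply]
  -- charmatrix of M has entries (if i = j then X - C (z i) else 0) + C (z i * lam i)
  have hchar : charmatrix M
      = Matrix.of fun i j => (if i = j then (X - C (z i)) else 0) + C (z i * lam i) := by
    ext i j
    rcases eq_or_ne i j with rfl | h
    · rw [charmatrix_apply_eq, hMentry]
      simp [mul_sub]
      ring
    · rw [charmatrix_apply_ne _ _ _ h, hMentry]
      simp [h, mul_sub]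
  -- compute the determinant via the fraction field
  have key : M.charpoly
      = ∏ i, (X - C (z i)) + ∑ j, C (z j * lam j) * ∏ i ∈ Finset.univ.erase j, (X - C (z i)) := by
    have hinj := IsFractionRing.injective (ℂ[X]) (RatFunc ℂ)
    apply hinj
    have hd : ∀ i, algebraMap ℂ[X] (RatFunc ℂ) (X - C (z i)) ≠ 0 := by
      intro i
      simp only [ne_eq, map_eq_zero_iff _ hinj]
      exact X_sub_C_ne_zero (z i)
    have hmapeq : (Matrix.of fun i j =>
          ((if i = j then (X - C (z i)) else 0) + C (z i * lam i) : ℂ[X])).map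
          (algebraMap ℂ[X] (RatFunc ℂ))
        = Matrix.of fun i j =>
          (if i = j then algebraMap ℂ[X] (RatFunc ℂ) (X - C (z i)) else 0)
            + algebraMap ℂ[X] (RatFunc ℂ) (C (z i * lam i)) := by
      ext i j
      by_cases h : i = j <;> simp [Matrix.map_apply, h]
    unfold Matrix.charpoly
    rw [RingHom.map_det, RingHom.mapMatrix_apply, hchar, hmapeq,
      det_diag_add_const_rows _ _ hd]
    simp only [map_add, map_sum, map_prod, _root_.map_mul]
  rw [key, Finset.mul_sum]
  have hterm : ∀ j ∈ (Finset.univ : Finset (Fin n)),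
      X * (C (lam j) * ∏ i ∈ Finset.univ.erase j, (X - C (z i)))
        = C (lam j) * ∏ i, (X - C (z i))
          + C (z j * lam j) * ∏ i ∈ Finset.univ.erase j, (X - C (z i)) := by
    intro j _
    rw [← Finset.mul_prod_erase Finset.univ _ (Finset.mem_univ j), C_mul]
    ring
  rw [Finset.sum_congr rfl hterm, Finset.sum_add_distrib, ← Finset.sum_mul, ← map_sum, hlam,
    C_1, one_mul]
end

section
/- There exist complex numbers $z_1,\dots,z_n$ and nonnegative weights $r_{ij}$ on pairs $1\le i<j\le n$ summing to $1$ such that some zero of $\sum_{i<j} r_{ij} g_{ij}(z)$ lies outside the closed convex hull of $\{z_1,\dots,z_n\}$. Concretely, for $p(z)=z^2(z-i)^2$, the polynomial $g(z)=\tfrac13\big(z^2+z(z-i)+(z-i)^2\big)$ has a zero $\tfrac{i}{2}+\tfrac{1}{2\sqrt3}$, which does not lie in the convex hull of $\{0,i\}$. -/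
open Polynomial Finset Complex

/-!
Take the zeros `0, 0, I, I` of `z ^ 2 * (z - I) ^ 2` and give weight `1 / 3` to the pairs
`(0, 1)`, `(0, 2)`, `(2, 3)`, whose `g_ij` are `(z - I) ^ 2`, `z * (z - I)` and `z ^ 2`. The
resulting combination is `(3 z ^ 2 - 3 I z - 1) / 3`, with the zero `I / 2 + 1 / (2 √3)`; its
positive real part puts it off the imaginary axis, which contains the convex hull of `{0, I}`.
-/

lemma re_eq_zero_of_mem_convexHull {s : Set ℂ} (hs : ∀ w ∈ s, w.re = 0) {z : ℂ}
    (hz : z ∈ convexHull ℝ s) : z.re = 0 :=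
  convexHull_min hs ((convex_singleton (0 : ℝ)).linear_preimage reLm) hz

noncomputable def escapePoint : ℂ := I / 2 + 1 / (2 * (√3 : ℂ))

lemma escapePoint_re_pos : 0 < escapePoint.re := by
  simp [escapePoint]

lemma isRoot_escapePoint :
    (C (1 / 3 : ℂ) * (X ^ 2 + X * (X - C I) + (X - C I) ^ 2)).IsRoot escapePoint := by
  have h3 : (√3 : ℂ) ^ 2 = 3 := by norm_cast; exact Real.sq_sqrt (by norm_num)
  have : (√3 : ℂ) ≠ 0 := by norm_num
  simp only [IsRoot, eval_mul, eval_add, eval_pow, eval_sub, eval_C, eval_X, escapePoint]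
  field_simp
  linear_combination I ^ 2 * h3 + 3 * I_sq

def doubledZeros (m : ℕ) : ℂ := if m ≤ 1 then 0 else I

noncomputable def pairWeights (i j : ℕ) : ℝ :=
  if (i, j) ∈ [(0, 1), (0, 2), (2, 3)] then 1 / 3 else 0

lemma pairWeights_nonneg (i j : ℕ) : 0 ≤ pairWeights i j := by
  unfold pairWeights; split_ifs <;> norm_num

lemma sum_pairWeights :
    (∑ i ∈ range 4, ∑ j ∈ (range 4).filter (fun j => i < j), pairWeights i j) = 1 := by
  norm_num [Finset.sum_filter, Finset.sum_range_succ, pairWeights]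

lemma weighted_gij_sum_eq : (∑ i ∈ range 4, ∑ j ∈ (range 4).filter (fun j => i < j),
      C ((pairWeights i j : ℂ)) *
        ∏ m ∈ ((range 4).erase i).erase j, (X - C (doubledZeros m))) =
    C (1 / 3 : ℂ) * (X ^ 2 + X * (X - C I) + (X - C I) ^ 2) := by
  have e01 : ((range 4).erase 0).erase 1 = {2, 3} := by decide
  have e02 : ((range 4).erase 0).erase 2 = {1, 3} := by decide
  have e23 : ((range 4).erase 2).erase 3 = {0, 1} := by decide
  calc _ = C (1 / 3 : ℂ) * ((X - C I) * (X - C I)) + C (1 / 3) * (X * (X - C I))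
        + C (1 / 3) * (X * X) := by
        simp only [sum_filter, sum_range_succ, sum_range_zero, pairWeights]
        norm_num [e01, e02, e23, doubledZeros]
    _ = _ := by ring

lemma image_doubledZeros : ((range 4).image doubledZeros : Set ℂ) = {0, I} := by
  ext w
  simp only [coe_image, coe_range, Set.mem_image, Set.mem_Iio, Set.mem_insert_iff,
    Set.mem_singleton_iff, doubledZeros]
  constructor
  · rintro ⟨m, -, rfl⟩
    split_ifs <;> simp
  · rintro (rfl | rfl)
    exacts [⟨0, by norm_num⟩, ⟨2, by norm_num⟩]

lemma escapePoint_not_mem_convexHull : escapePoint ∉ convexHull ℝ ({0, I} : Set ℂ) :=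
  fun h => escapePoint_re_pos.ne' (re_eq_zero_of_mem_convexHull (by simp) h)

theorem convex_combination_of_gij_can_escape_convexHull :
    (∃ (n : ℕ) (z : ℕ → ℂ) (r : ℕ → ℕ → ℝ), 2 ≤ n ∧
      (∀ i j, 0 ≤ r i j) ∧
      (∑ i ∈ Finset.range n,
        ∑ j ∈ (Finset.range n).filter (fun j => i < j), r i j) = 1 ∧
      ∃ a : ℂ,
        (∑ i ∈ Finset.range n,
          ∑ j ∈ (Finset.range n).filter (fun j => i < j),
            C ((r i j : ℂ)) *
              ∏ m ∈ ((Finset.range n).erase i).erase j, (X - C (z m))).IsRoot a ∧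
        a ∉ convexHull ℝ (↑((Finset.range n).image z) : Set ℂ)) ∧
    ((C ((1 / 3 : ℂ)) *
        (X ^ 2 + X * (X - C Complex.I) + (X - C Complex.I) ^ 2)).IsRoot
        (Complex.I / 2 + 1 / (2 * Real.sqrt 3)) ∧
      (Complex.I / 2 + 1 / (2 * (Real.sqrt 3 : ℂ))) ∉
        convexHull ℝ ({0, Complex.I} : Set ℂ)) := by
  refine ⟨⟨4, doubledZeros, pairWeights, by norm_num, pairWeights_nonneg, sum_pairWeights,
    escapePoint, ?_, ?_⟩, isRoot_escapePoint, escapePoint_not_mem_convexHull⟩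
  · rw [weighted_gij_sum_eq]; exact isRoot_escapePoint
  · rw [image_doubledZeros]; exact escapePoint_not_mem_convexHull
end

section
/- The set $S$ of all zeros of all convex combinations of incomplete polynomials equals the closed convex hull of $\{z_1,\dots,z_n\}$: $S=\{w\in\mathbb{C}: A_n^\gamma(w)=0 \text{ for some } \gamma\} = H(z_1,\dots,z_n)$. -/
/-!
Write `a_k = w - z_k`. If `w` is not a node, `∑ γ_k ∏_{j ≠ k} a_j = (∏ a_j) · ∑ γ_k / a_k` and
`γ / a = conj ((γ / |a|²) a)`, so `A_n^γ(w) = 0` exactly when the nonnegative, not all zero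
weights `γ_k / |a_k|²` annihilate the vectors `a_k`. Rescaling by the positive `|a_k|²` shows that
such `γ` exists iff some nonnegative, nonzero weights annihilate the `a_k`, i.e. iff `w` is a
convex combination of the `z_k`. A node `z_j` is a zero of `g_k` for any `k ≠ j`, and such a `k`
exists because `n ≥ 2`.
-/

open Polynomial Finset ComplexConjugate

section ConvexHull

variable {R E ι : Type*} [Field R] [LinearOrder R] [IsStrictOrderedRing R]
  [AddCommGroup E] [Module R E]

theorem Finset.exists_weights_of_mem_convexHull_image {s : Finset ι} {z : ι → E} {x : E}
    (hx : x ∈ convexHull R (z '' s)) :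
    ∃ ν : ι → R, (∀ i ∈ s, 0 ≤ ν i) ∧ ∑ i ∈ s, ν i = 1 ∧ ∑ i ∈ s, ν i • z i = x := by
  classical
  refine convexHull_min (t := {y | ∃ ν : ι → R, (∀ i ∈ s, 0 ≤ ν i) ∧ ∑ i ∈ s, ν i = 1 ∧
    ∑ i ∈ s, ν i • z i = y}) ?_ ?_ hx
  · rintro _ ⟨i, hi : i ∈ s, rfl⟩
    refine ⟨Pi.single i 1, fun j _ => ?_, by simp [hi], by simp [Pi.single_apply, hi]⟩
    by_cases h : j = i <;> simp [h]
  · rintro _ ⟨ν, hν₀, hν₁, rfl⟩ _ ⟨μ, hμ₀, hμ₁, rfl⟩ a b ha hb hab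
    refine ⟨a • ν + b • μ, fun i hi => ?_, ?_, ?_⟩
    · simp only [Pi.add_apply, Pi.smul_apply, smul_eq_mul]
      exact add_nonneg (mul_nonneg ha (hν₀ i hi)) (mul_nonneg hb (hμ₀ i hi))
    · simp [sum_add_distrib, ← mul_sum, hν₁, hμ₁, hab]
    · simp [add_smul, mul_smul, sum_add_distrib, smul_sum]

theorem Finset.mem_convexHull_image_iff_exists_sum_smul_sub_eq_zero {s : Finset ι} {z : ι → E}
    {x : E} : x ∈ convexHull R (z '' s) ↔
      ∃ ν : ι → R, (∀ i ∈ s, 0 ≤ ν i) ∧ 0 < ∑ i ∈ s, ν i ∧ ∑ i ∈ s, ν i • (x - z i) = 0 := by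
  constructor
  · intro hx
    obtain ⟨ν, hν₀, hν₁, hνx⟩ := exists_weights_of_mem_convexHull_image hx
    refine ⟨ν, hν₀, hν₁ ▸ one_pos, ?_⟩
    simp [smul_sub, sum_sub_distrib, ← sum_smul, hν₁, hνx]
  · rintro ⟨ν, hν₀, hνpos, hν⟩
    have hx : s.centerMass ν z = x := by
      rw [centerMass, inv_smul_eq_iff₀ hνpos.ne', sum_smul, ← sub_eq_zero, ← neg_eq_zero, neg_sub,
        ← sum_sub_distrib]
      simpa [smul_sub] using hν
    exact hx ▸ s.centerMass_mem_convexHull hν₀ hνpos fun i hi => Set.mem_image_of_mem z hi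

theorem Finset.exists_sum_eq_one_sum_div_smul_eq_zero_iff {s : Finset ι} {r : ι → R}
    (hr : ∀ i ∈ s, 0 < r i) (a : ι → E) :
    (∃ γ : ι → R, (∀ i ∈ s, 0 ≤ γ i) ∧ ∑ i ∈ s, γ i = 1 ∧ ∑ i ∈ s, (γ i / r i) • a i = 0) ↔
      ∃ ν : ι → R, (∀ i ∈ s, 0 ≤ ν i) ∧ 0 < ∑ i ∈ s, ν i ∧ ∑ i ∈ s, ν i • a i = 0 := by
  constructor
  · rintro ⟨γ, hγ₀, hγ₁, hγ⟩
    refine ⟨fun i => γ i / r i, fun i hi => div_nonneg (hγ₀ i hi) (hr i hi).le, ?_, hγ⟩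
    obtain ⟨i, hi, hγi⟩ := exists_ne_zero_of_sum_ne_zero (hγ₁ ▸ one_ne_zero : ∑ i ∈ s, γ i ≠ 0)
    exact sum_pos' (fun j hj => div_nonneg (hγ₀ j hj) (hr j hj).le)
      ⟨i, hi, div_pos ((hγ₀ i hi).lt_of_ne' hγi) (hr i hi)⟩
  · rintro ⟨ν, hν₀, hνpos, hν⟩
    set D := ∑ i ∈ s, ν i * r i
    have hD : 0 < D := by
      obtain ⟨i, hi, hνi⟩ := exists_ne_zero_of_sum_ne_zero hνpos.ne'
      exact sum_pos' (fun j hj => mul_nonneg (hν₀ j hj) (hr j hj).le)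
        ⟨i, hi, mul_pos ((hν₀ i hi).lt_of_ne' hνi) (hr i hi)⟩
    refine ⟨fun i => ν i * r i / D,
      fun i hi => div_nonneg (mul_nonneg (hν₀ i hi) (hr i hi).le) hD.le,
      by rw [← sum_div, div_self hD.ne'], ?_⟩
    have hcancel : ∀ i ∈ s, (ν i * r i / D / r i) • a i = D⁻¹ • ν i • a i := fun i hi => by
      rw [smul_smul]; congr 1; field_simp [(hr i hi).ne']
    rw [sum_congr rfl hcancel, ← smul_sum, hν, smul_zero]

end ConvexHull

theorem Finset.sum_mul_prod_erase_eq_prod_mul_sum_div {ι K : Type*} [DecidableEq ι] [Field K]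
    (s : Finset ι) {a : ι → K} (ha : ∀ i ∈ s, a i ≠ 0) (c : ι → K) :
    ∑ i ∈ s, c i * ∏ j ∈ s.erase i, a j = (∏ j ∈ s, a j) * ∑ i ∈ s, c i / a i := by
  rw [mul_sum]
  refine sum_congr rfl fun i hi => ?_
  rw [← mul_prod_erase s a hi]
  field_simp [ha i hi]

theorem Complex.ofReal_div_eq_conj_smul (γ : ℝ) (a : ℂ) :
    (γ : ℂ) / a = conj ((γ / Complex.normSq a) • a) := by
  rw [div_eq_mul_inv, Complex.inv_def, Complex.real_smul, map_mul, Complex.conj_ofReal]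
  push_cast
  ring

variable {ι : Type*} [DecidableEq ι]

theorem isRoot_sum_C_mul_prod_erase_iff {s : Finset ι} {z : ι → ℂ} {w : ℂ}
    (hw : ∀ i ∈ s, w ≠ z i) (γ : ι → ℝ) :
    (∑ i ∈ s, C (γ i : ℂ) * ∏ j ∈ s.erase i, (X - C (z j))).IsRoot w ↔
      ∑ i ∈ s, (γ i / Complex.normSq (w - z i)) • (w - z i) = 0 := by
  have ha : ∀ i ∈ s, w - z i ≠ 0 := fun i hi => sub_ne_zero.2 (hw i hi)
  simp only [IsRoot.def, eval_finsetSum, eval_mul, eval_C, eval_prod, eval_sub, eval_X]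
  rw [sum_mul_prod_erase_eq_prod_mul_sum_div s ha, mul_eq_zero,
    or_iff_right (prod_ne_zero_iff.2 ha)]
  simp_rw [Complex.ofReal_div_eq_conj_smul, ← map_sum, map_eq_zero]

theorem exists_isRoot_sum_C_mul_prod_erase_of_mem {s : Finset ι} (z : ι → ℂ) {j k : ι}
    (hj : j ∈ s) (hk : k ∈ s) (hjk : j ≠ k) :
    ∃ γ : ι → ℝ, (∀ i ∈ s, 0 ≤ γ i) ∧ ∑ i ∈ s, γ i = 1 ∧
      (∑ i ∈ s, C (γ i : ℂ) * ∏ l ∈ s.erase i, (X - C (z l))).IsRoot (z j) := by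
  refine ⟨Pi.single k 1, fun i _ => ?_, by simp [hk], ?_⟩
  · by_cases h : i = k <;> simp [h]
  · rw [IsRoot.def, eval_finsetSum, sum_eq_single k (fun i _ hik => by simp [hik]) (absurd hk)]
    simpa [eval_prod] using
      prod_eq_zero (f := fun l => z j - z l) (mem_erase.2 ⟨hjk, hj⟩) (sub_self _)

theorem zero_set_of_convex_combinations_eq_convexHull
    (n : ℕ) (hn : 2 ≤ n) (z : ℕ → ℂ) :
    {w : ℂ | ∃ γ : ℕ → ℝ, (∀ k ∈ Finset.range n, 0 ≤ γ k) ∧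
        (∑ k ∈ Finset.range n, γ k = 1) ∧
        (∑ k ∈ Finset.range n, C ((γ k : ℂ)) *
          ∏ j ∈ (Finset.range n).erase k, (X - C (z j))).IsRoot w}
      = convexHull ℝ (↑((Finset.range n).image z) : Set ℂ) := by
  ext w
  rw [Set.mem_ofPred_eq, coe_image]
  by_cases hnode : ∃ j ∈ range n, z j = w
  · obtain ⟨j, hj, rfl⟩ := hnode
    obtain ⟨k, hk, hkj⟩ := (one_lt_card_iff_nontrivial.1 (by rwa [card_range])).exists_ne j
    exact iff_of_true (exists_isRoot_sum_C_mul_prod_erase_of_mem z hj hk hkj.symm)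
      (subset_convexHull ℝ _ ⟨j, hj, rfl⟩)
  · push Not at hnode
    have hr : ∀ k ∈ range n, 0 < Complex.normSq (w - z k) := fun k hk =>
      Complex.normSq_pos.2 (sub_ne_zero.2 (hnode k hk).symm)
    simp_rw [isRoot_sum_C_mul_prod_erase_iff fun k hk => (hnode k hk).symm]
    rw [exists_sum_eq_one_sum_div_smul_eq_zero_iff hr,
      mem_convexHull_image_iff_exists_sum_smul_sub_eq_zero]
end

section
/- If $a$ lies in the convex hull of $\{z_1,\dots,z_n\}$, i.e. $\sum_{i=1}^n t_i(a-z_i)=0$ for some $t_i\ge0$ with $\sum_i t_i=1$, and $a\ne z_i$ for all $i$, then taking $\gamma_i = t_i|a-z_i|^2 / \sum_j t_j|a-z_j|^2$ gives nonnegative weights summing to $1$ for which $A_n^\gamma(a)=0$. -/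
open Polynomial Finset

/-! Since `|a - z_k|² ∏_{j ≠ k} (a - z_j) = conj (a - z_k) ∏_j (a - z_j)`, the value of `A_n^γ`
at `a` is `conj (∑_k t_k (a - z_k)) ∏_j (a - z_j) / S = 0`, where `S = ∑_j t_j |a - z_j|²` is
positive because some `t_j` is positive and no `a - z_j` vanishes. -/

section

variable {ι : Type*} [DecidableEq ι]

theorem norm_sq_mul_prod_erase {s : Finset ι} {x : ι → ℂ} {k : ι} (hk : k ∈ s) :
    ((‖x k‖ ^ 2 : ℝ) : ℂ) * ∏ j ∈ s.erase k, x j = starRingEnd ℂ (x k) * ∏ j ∈ s, x j := by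
  rw [← mul_prod_erase s x hk, Complex.ofReal_pow, ← Complex.conj_mul']
  ring

theorem sum_mul_norm_sq_mul_prod_erase_eq_zero {s : Finset ι} {t : ι → ℝ} {x : ι → ℂ}
    (h : ∑ i ∈ s, (t i : ℂ) * x i = 0) :
    ∑ k ∈ s, ((t k * ‖x k‖ ^ 2 : ℝ) : ℂ) * ∏ j ∈ s.erase k, x j = 0 := by
  calc ∑ k ∈ s, ((t k * ‖x k‖ ^ 2 : ℝ) : ℂ) * ∏ j ∈ s.erase k, x j
      = ∑ k ∈ s, starRingEnd ℂ ((t k : ℂ) * x k) * ∏ j ∈ s, x j := by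
        refine sum_congr rfl fun k hk => ?_
        rw [Complex.ofReal_mul, mul_assoc, norm_sq_mul_prod_erase hk, map_mul,
          Complex.conj_ofReal, mul_assoc]
    _ = 0 := by rw [← sum_mul, ← map_sum, h, map_zero, zero_mul]

end

theorem sum_mul_pos_of_sum_pos {ι R : Type*} [Semiring R] [LinearOrder R] [IsStrictOrderedRing R]
    {s : Finset ι} {t f : ι → R}
    (ht0 : ∀ i ∈ s, 0 ≤ t i) (ht : 0 < ∑ i ∈ s, t i) (hf : ∀ i ∈ s, 0 < f i) :
    0 < ∑ i ∈ s, t i * f i := by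
  obtain ⟨i, hi, hti⟩ := exists_lt_of_sum_lt (s := s) (f := 0) (g := t) (by simpa using ht)
  exact sum_pos' (fun j hj => mul_nonneg (ht0 j hj) (hf j hj).le) ⟨i, hi, mul_pos hti (hf i hi)⟩

theorem explicit_weights_for_point_in_convexHull_general
    (n : ℕ) (z : ℕ → ℂ) (t : ℕ → ℝ) (a : ℂ)
    (ht0 : ∀ i ∈ Finset.range n, 0 ≤ t i)
    (ht1 : ∑ i ∈ Finset.range n, t i = 1)
    (ha : ∑ i ∈ Finset.range n, (t i : ℂ) * (a - z i) = 0)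
    (haz : ∀ i ∈ Finset.range n, a ≠ z i) :
    let γ : ℕ → ℝ := fun i =>
      t i * ‖a - z i‖ ^ 2 /
        (∑ j ∈ Finset.range n, t j * ‖a - z j‖ ^ 2)
    (∀ i ∈ Finset.range n, 0 ≤ γ i) ∧
    (∑ i ∈ Finset.range n, γ i = 1) ∧
    (∑ k ∈ Finset.range n, C ((γ k : ℂ)) *
      ∏ j ∈ (Finset.range n).erase k, (X - C (z j))).IsRoot a := by
  intro γ
  set S := ∑ j ∈ range n, t j * ‖a - z j‖ ^ 2
  have hS : 0 < S := sum_mul_pos_of_sum_pos ht0 (ht1 ▸ one_pos)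
    fun i hi => pow_pos (norm_pos_iff.mpr (sub_ne_zero.mpr (haz i hi))) 2
  refine ⟨fun i hi => div_nonneg (mul_nonneg (ht0 i hi) (sq_nonneg _)) hS.le,
    by rw [← sum_div, div_self hS.ne'], ?_⟩
  simp only [IsRoot, eval_finsetSum, eval_mul, eval_C, eval_prod, eval_sub, eval_X, γ,
    Complex.ofReal_div, div_mul_eq_mul_div, ← sum_div,
    sum_mul_norm_sq_mul_prod_erase_eq_zero ha, zero_div]

theorem explicit_weights_for_point_in_convexHull
    (n : ℕ) (hn : 1 ≤ n) (z : ℕ → ℂ) (t : ℕ → ℝ) (a : ℂ)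
    (ht0 : ∀ i ∈ Finset.range n, 0 ≤ t i)
    (ht1 : ∑ i ∈ Finset.range n, t i = 1)
    (ha : ∑ i ∈ Finset.range n, (t i : ℂ) * (a - z i) = 0)
    (haz : ∀ i ∈ Finset.range n, a ≠ z i) :
    let γ : ℕ → ℝ := fun i =>
      t i * ‖a - z i‖ ^ 2 /
        (∑ j ∈ Finset.range n, t j * ‖a - z j‖ ^ 2)
    (∀ i ∈ Finset.range n, 0 ≤ γ i) ∧
    (∑ i ∈ Finset.range n, γ i = 1) ∧
    (∑ k ∈ Finset.range n, C ((γ k : ℂ)) *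
      ∏ j ∈ (Finset.range n).erase k, (X - C (z j))).IsRoot a :=
  explicit_weights_for_point_in_convexHull_general n z t a ht0 ht1 ha haz
end

section
/- All zeros of $A_n^\gamma(z)=\sum_{k=1}^n\gamma_k g_k(z)$ lie in the disk $\left|z-\frac{\sum_{j=1}^n(1-\gamma_j)z_j}{n-1}\right|\le \sqrt{\frac{n-2}{n-1}}\left(\sum_{j=1}^{n-1}|(1-\gamma_j)z_j+\gamma_j z_n|^2+(n-2)\sum_{j=1}^{n-1}\gamma_j^2|z_n-z_j|^2-\frac{|\sum_{j=1}^n(1-\gamma_j)z_j|^2}{n-1}\right)^{1/2}$. -/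
open Polynomial Finset Matrix

/-!
Put `m = n - 1`. Since `∑ γₖ = 1`, the polynomial `A = ∑ₖ γₖ gₖ` equals
`∏_{k<m} (X - zₖ) - ∑_{k<m} γₖ (zₘ - zₖ) ∏_{j<m, j≠k} (X - zⱼ)`, the characteristic polynomial of
the `m × m` matrix `M = diag(zₖ) + u 𝟙ᵀ` with `uₖ = γₖ (zₘ - zₖ)` (matrix determinant lemma). So a
zero `w` of `A` is an eigenvalue of `M`, and the disk is the bound
`|w - tr M / m|² ≤ (m - 1)/m · (‖M‖_F² - |tr M|² / m)`, valid for every eigenvalue of every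
`m × m` matrix. For a unit eigenvector `v` of the traceless `B = M - (tr M / m) I` this is one
Cauchy–Schwarz inequality: `w - tr M / m = v* B v = ∑ᵢⱼ Bᵢⱼ (v̄ᵢ vⱼ - δᵢⱼ / m)`, and the weight
matrix `v̄ vᵀ - I / m` has squared Frobenius norm `1 - 1/m`.
-/

theorem norm_sum_mul_sq_le {ι R : Type*} [SeminormedRing R] (s : Finset ι) (f g : ι → R) :
    ‖∑ i ∈ s, f i * g i‖ ^ 2 ≤ (∑ i ∈ s, ‖f i‖ ^ 2) * ∑ i ∈ s, ‖g i‖ ^ 2 :=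
  (pow_le_pow_left₀ (norm_nonneg _)
    ((norm_sum_le _ _).trans (sum_le_sum fun i _ => norm_mul_le (f i) (g i))) 2).trans
    (sum_mul_sq_le_sq_mul_sq s _ _)

theorem Finset.sum_mul_prod_erase_insert_of_sum_eq_one {ι R : Type*} [CommRing R] [DecidableEq ι]
    {s : Finset ι} {a : ι} (ha : a ∉ s) (g f : ι → R) (hg : ∑ k ∈ insert a s, g k = 1) :
    ∑ k ∈ insert a s, g k * ∏ j ∈ (insert a s).erase k, f j
      = ∏ j ∈ s, f j - ∑ k ∈ s, g k * (f k - f a) * ∏ j ∈ s.erase k, f j := by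
  rw [sum_insert ha] at hg ⊢
  have key : ∀ k ∈ s, g k * ∏ j ∈ (insert a s).erase k, f j
      = g k * ∏ j ∈ s, f j - g k * (f k - f a) * ∏ j ∈ s.erase k, f j := by
    intro k hk
    rw [erase_insert_of_ne (ne_of_mem_of_not_mem hk ha).symm,
      prod_insert fun h => ha (mem_of_mem_erase h), ← mul_prod_erase s f hk]
    ring
  rw [erase_insert ha, sum_congr rfl key, sum_sub_distrib, ← sum_mul]
  linear_combination (∏ j ∈ s, f j) * hg

namespace Matrix

section Field

variable {ι K : Type*} [Fintype ι] [DecidableEq ι] [Field K]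

theorem det_diagonal_add_vecMulVec_one {a : ι → K} (ha : ∀ i, a i ≠ 0) (u : ι → K) :
    (diagonal a + vecMulVec u 1).det = ∏ i, a i + ∑ k, u k * ∏ j ∈ univ.erase k, a j := by
  have hfactor : diagonal a + vecMulVec u 1 = diagonal a * (1 + vecMulVec (u / a) 1) := by
    ext i j
    simp only [diagonal_mul, add_apply, diagonal_apply, one_apply, vecMulVec_apply, Pi.div_apply,
      Pi.one_apply, mul_one]
    split_ifs <;> simp [mul_add, mul_div_cancel₀ _ (ha i)]
  rw [hfactor, det_mul, det_diagonal, vecMulVec_eq Unit, det_one_add_replicateCol_mul_replicateRow,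
    mul_add, mul_one, dotProduct, mul_sum]
  congr 1
  refine sum_congr rfl fun k _ => ?_
  rw [← mul_prod_erase univ a (mem_univ k)]
  simp only [Pi.one_apply, one_mul, Pi.div_apply]
  field_simp [ha k]

theorem charpoly_diagonal_add_vecMulVec_one [Infinite K] (d u : ι → K) :
    (diagonal d + vecMulVec u 1).charpoly
      = ∏ i, (X - C (d i)) - ∑ k, C (u k) * ∏ j ∈ univ.erase k, (X - C (d j)) := by
  refine eq_of_infinite_eval_eq _ _ ((Set.finite_range d).infinite_compl.mono fun t ht => ?_)
  have hne : ∀ i, t - d i ≠ 0 := fun i h => ht ⟨i, (sub_eq_zero.mp h).symm⟩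
  have hmat : scalar ι t - (diagonal d + vecMulVec u 1)
      = diagonal (fun i => t - d i) + vecMulVec (-u) 1 := by
    ext i j
    simp only [sub_apply, add_apply, scalar_apply, diagonal_apply, vecMulVec_apply, Pi.neg_apply,
      Pi.one_apply, mul_one]
    split_ifs <;> ring
  simp only [Set.mem_ofPred_eq, eval_charpoly, hmat, det_diagonal_add_vecMulVec_one hne, eval_sub,
    eval_prod, eval_finsetSum, eval_mul, eval_X, eval_C, Pi.neg_apply]
  simp [sub_eq_add_neg]

end Field

theorem exists_mulVec_eq_smul_of_isRoot_charpoly {ι R : Type*} [Fintype ι] [DecidableEq ι]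
    [CommRing R] [IsDomain R] {A : Matrix ι ι R} {μ : R} (h : A.charpoly.IsRoot μ) :
    ∃ v ≠ 0, A *ᵥ v = μ • v := by
  obtain ⟨v, hv⟩ := ((Module.End.hasEigenvalue_iff_isRoot_charpoly (toLin' A) μ).mpr
    (by rwa [charpoly_toLin'])).exists_hasEigenvector
  exact ⟨v, hv.2, by simpa using hv.apply_eq_smul⟩

theorem trace_diagonal_add_vecMulVec_one {ι R : Type*} [Fintype ι] [DecidableEq ι] [Semiring R]
    (d u : ι → R) : (diagonal d + vecMulVec u 1).trace = ∑ i, (d i + u i) := by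
  simp [trace]

theorem sum_sum_norm_sq_diagonal_add_vecMulVec_one {ι R : Type*} [Fintype ι] [DecidableEq ι]
    [SeminormedRing R] (d u : ι → R) :
    ∑ i, ∑ j, ‖(diagonal d + vecMulVec u 1 : Matrix ι ι R) i j‖ ^ 2
      = ∑ i, (‖d i + u i‖ ^ 2 + ((Fintype.card ι : ℝ) - 1) * ‖u i‖ ^ 2) := by
  have h_apply (i j : ι) : ‖(diagonal d + vecMulVec u 1 : Matrix ι ι R) i j‖ ^ 2
      = ‖u i‖ ^ 2 + if i = j then ‖d i + u i‖ ^ 2 - ‖u i‖ ^ 2 else 0 := by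
    obtain rfl | h := eq_or_ne i j <;> simp [*]
  refine sum_congr rfl fun i _ => ?_
  simp only [h_apply, sum_add_distrib, sum_const, card_univ, nsmul_eq_mul, sum_ite_eq, mem_univ,
    if_true]
  ring

section RCLike

variable {ι 𝕜 : Type*} [Fintype ι] [DecidableEq ι] [RCLike 𝕜]

theorem norm_sq_star_dotProduct_mulVec_le_of_trace_eq_zero {B : Matrix ι ι 𝕜} (hB : B.trace = 0)
    (v : ι → 𝕜) :
    ‖star v ⬝ᵥ B *ᵥ v‖ ^ 2 ≤ ((Fintype.card ι : ℝ) - 1) / Fintype.card ι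
      * (∑ i, ∑ j, ‖B i j‖ ^ 2) * (∑ i, ‖v i‖ ^ 2) ^ 2 := by
  set m : ℝ := (Fintype.card ι : ℝ)
  set s : ℝ := ∑ i, ‖v i‖ ^ 2
  set W : ι → ι → 𝕜 := fun i j => star (v i) * v j - if i = j then ((s / m : ℝ) : 𝕜) else 0
  have hμ : star v ⬝ᵥ B *ᵥ v = ∑ p : ι × ι, B p.1 p.2 * W p.1 p.2 := by
    simp only [Fintype.sum_prod_type, W, mul_sub, sum_sub_distrib, mul_ite, mul_zero, sum_ite_eq,
      mem_univ, if_true, ← sum_mul]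
    rw [show ∑ i, B i i = B.trace from rfl, hB, zero_mul, sub_zero]
    simp only [dotProduct, mulVec, mul_sum, Pi.star_apply]
    exact sum_congr rfl fun i _ => sum_congr rfl fun j _ => by ring
  have hW_apply (i j : ι) : ‖W i j‖ ^ 2
      = ‖v i‖ ^ 2 * ‖v j‖ ^ 2 + if i = j then (s / m) ^ 2 - 2 * (s / m) * ‖v i‖ ^ 2 else 0 := by
    obtain rfl | h := eq_or_ne i j
    · have : W i i = ((‖v i‖ ^ 2 - s / m : ℝ) : 𝕜) := by
        simp [W, RCLike.star_def, RCLike.conj_mul]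
      rw [this, RCLike.norm_ofReal, sq_abs, if_pos rfl]
      ring
    · simp [W, h, mul_pow]
  have hW : ∑ i, ∑ j, ‖W i j‖ ^ 2 = (m - 1) / m * s ^ 2 := by
    simp only [hW_apply, sum_add_distrib, sum_ite_eq, mem_univ, if_true, ← mul_sum, ← sum_mul]
    rw [sum_sub_distrib, sum_const, card_univ, nsmul_eq_mul, ← mul_sum]
    change s * s + (m * (s / m) ^ 2 - 2 * (s / m) * s) = _
    obtain hι | hι := isEmpty_or_nonempty ι
    · simp [s]
    · have hm : m ≠ 0 := Nat.cast_ne_zero.mpr Fintype.card_ne_zero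
      field_simp
      ring
  calc ‖star v ⬝ᵥ B *ᵥ v‖ ^ 2
      ≤ (∑ p : ι × ι, ‖B p.1 p.2‖ ^ 2) * ∑ p : ι × ι, ‖W p.1 p.2‖ ^ 2 :=
        hμ ▸ norm_sum_mul_sq_le _ _ _
    _ = _ := by rw [Fintype.sum_prod_type, Fintype.sum_prod_type, hW]; ring

theorem sum_sum_norm_sq_sub_trace_div_card_smul_one (A : Matrix ι ι 𝕜) :
    ∑ i, ∑ j, ‖(A - (A.trace / Fintype.card ι) • 1) i j‖ ^ 2
      = ∑ i, ∑ j, ‖A i j‖ ^ 2 - ‖A.trace‖ ^ 2 / Fintype.card ι := by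
  set m : ℝ := (Fintype.card ι : ℝ)
  set t := A.trace
  set c : 𝕜 := t / Fintype.card ι
  have h_apply (i j : ι) : ‖(A - c • 1) i j‖ ^ 2
      = ‖A i j‖ ^ 2 + if i = j then ‖c‖ ^ 2 - 2 * RCLike.re (star (A i i) * c) else 0 := by
    obtain rfl | h := eq_or_ne i j
    · rw [sub_apply, smul_apply, one_apply_eq, smul_eq_mul, mul_one, norm_sub_sq (𝕜 := 𝕜),
        RCLike.inner_apply', if_pos rfl, RCLike.star_def]
      ring
    · simp [h]
  have hcross : ∑ i, RCLike.re (star (A i i) * c) = ‖t‖ ^ 2 / m := by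
    rw [← map_sum, ← sum_mul, ← star_sum, show ∑ i, A i i = t from rfl, RCLike.star_def,
      mul_div_assoc', RCLike.conj_mul, ← RCLike.ofReal_pow, ← RCLike.ofReal_natCast,
      ← RCLike.ofReal_div, RCLike.ofReal_re]
  simp only [h_apply, sum_add_distrib, sum_ite_eq, mem_univ, if_true, sum_sub_distrib, sum_const,
    card_univ, nsmul_eq_mul, ← mul_sum, hcross]
  rw [norm_div, RCLike.norm_natCast]
  change _ + (m * (‖t‖ / m) ^ 2 - _) = _
  obtain hm | hm := eq_or_ne m 0
  · simp [hm]
  · field_simp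
    ring

theorem norm_sq_sub_trace_div_card_le_of_mulVec_eq_smul {A : Matrix ι ι 𝕜} {μ : 𝕜} {v : ι → 𝕜}
    (hv : v ≠ 0) (hAv : A *ᵥ v = μ • v) :
    ‖μ - A.trace / Fintype.card ι‖ ^ 2 ≤ ((Fintype.card ι : ℝ) - 1) / Fintype.card ι
      * (∑ i, ∑ j, ‖A i j‖ ^ 2 - ‖A.trace‖ ^ 2 / Fintype.card ι) := by
  obtain ⟨i₀, hi₀⟩ := Function.ne_iff.mp hv
  have : Nonempty ι := ⟨i₀⟩
  set c := A.trace / Fintype.card ι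
  have hB : (A - c • 1).trace = 0 := by
    rw [trace_sub, trace_smul, trace_one, smul_eq_mul,
      div_mul_cancel₀ _ (Nat.cast_ne_zero.mpr Fintype.card_ne_zero), sub_self]
  have hBv : (A - c • 1) *ᵥ v = (μ - c) • v := by
    rw [sub_mulVec, smul_mulVec, one_mulVec, hAv, sub_smul]
  set s := ∑ i, ‖v i‖ ^ 2
  have hs : 0 < s := sum_pos' (fun i _ => by positivity) ⟨i₀, mem_univ _, by positivity⟩
  have hvv : star v ⬝ᵥ v = (s : 𝕜) := by
    simp [s, dotProduct, RCLike.star_def, RCLike.conj_mul]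
  have key := norm_sq_star_dotProduct_mulVec_le_of_trace_eq_zero hB v
  rw [hBv, dotProduct_smul, hvv, smul_eq_mul, norm_mul, RCLike.norm_ofReal, abs_of_pos hs,
    sum_sum_norm_sq_sub_trace_div_card_smul_one] at key
  nlinarith [pow_pos hs 2]

end RCLike

end Matrix

section ConvexCombination

noncomputable def convexCombinationMatrix (z : ℕ → ℂ) (γ : ℕ → ℝ) (m : ℕ) :
    Matrix (range m) (range m) ℂ :=
  diagonal (fun i : range m => z i) + vecMulVec (fun i : range m => γ i * (z m - z i)) 1

variable {z : ℕ → ℂ} {γ : ℕ → ℝ} {m : ℕ}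

theorem charpoly_convexCombinationMatrix (hγ : ∑ k ∈ range (m + 1), γ k = 1) :
    (convexCombinationMatrix z γ m).charpoly
      = ∑ k ∈ range (m + 1), C (γ k : ℂ) * ∏ j ∈ (range (m + 1)).erase k, (X - C (z j)) := by
  have hγC : ∑ k ∈ insert m (range m), C (γ k : ℂ) = 1 := by
    rw [← range_add_one, ← map_sum, ← Complex.ofReal_sum, hγ, Complex.ofReal_one, map_one]
  rw [range_add_one, sum_mul_prod_erase_insert_of_sum_eq_one notMem_range_self _ _ hγC,
    convexCombinationMatrix, charpoly_diagonal_add_vecMulVec_one, univ_eq_attach,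
    prod_attach (range m) (fun j => X - C (z j))]
  simp only [prod_erase_attach (fun j => X - C (z j))]
  rw [sum_attach (range m)
    fun k => C (γ k * (z m - z k) : ℂ) * ∏ j ∈ (range m).erase k, (X - C (z j))]
  congr 1
  refine sum_congr rfl fun k _ => ?_
  simp only [map_mul, map_sub]
  ring

theorem trace_convexCombinationMatrix (hγ : ∑ k ∈ range (m + 1), γ k = 1) :
    (convexCombinationMatrix z γ m).trace = ∑ j ∈ range (m + 1), ((1 - γ j : ℝ) : ℂ) * z j := by
  rw [sum_range_succ] at hγ
  have hγm : ((1 - γ m : ℝ) : ℂ) = ∑ k ∈ range m, (γ k : ℂ) := by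
    rw [← hγ]
    push_cast
    ring
  rw [convexCombinationMatrix, trace_diagonal_add_vecMulVec_one,
    sum_coe_sort (range m) (fun i => z i + γ i * (z m - z i)), sum_range_succ, hγm, sum_mul,
    ← sum_add_distrib]
  refine sum_congr rfl fun k _ => ?_
  push_cast
  ring

theorem sum_sum_norm_sq_convexCombinationMatrix :
    ∑ i, ∑ j, ‖convexCombinationMatrix z γ m i j‖ ^ 2
      = ∑ j ∈ range m, ‖((1 - γ j : ℝ) : ℂ) * z j + (γ j : ℝ) * z m‖ ^ 2
        + ((m : ℝ) - 1) * ∑ j ∈ range m, γ j ^ 2 * ‖z m - z j‖ ^ 2 := by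
  rw [convexCombinationMatrix, sum_sum_norm_sq_diagonal_add_vecMulVec_one, sum_add_distrib,
    ← mul_sum, Fintype.card_coe, card_range,
    sum_coe_sort (range m) (fun i => ‖z i + γ i * (z m - z i)‖ ^ 2),
    sum_coe_sort (range m) (fun i => ‖(γ i : ℂ) * (z m - z i)‖ ^ 2)]
  congr 1
  · refine sum_congr rfl fun k _ => ?_
    congr 2
    push_cast
    ring
  · congr 1
    refine sum_congr rfl fun k _ => ?_
    simp [mul_pow]

end ConvexCombination

theorem zeros_of_convex_combination_in_disk_general
    (n : ℕ) (z : ℕ → ℂ) (γ : ℕ → ℝ)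
    (hγ1 : ∑ k ∈ Finset.range n, γ k = 1)
    (w : ℂ)
    (hw : (∑ k ∈ Finset.range n, C ((γ k : ℂ)) *
        ∏ j ∈ (Finset.range n).erase k, (X - C (z j))).IsRoot w) :
    ‖w - (∑ j ∈ Finset.range n, ((1 - γ j : ℝ) : ℂ) * z j) / ((n : ℂ) - 1)‖
      ≤ Real.sqrt (((n : ℝ) - 2) / ((n : ℝ) - 1)) *
        Real.sqrt
          ((∑ j ∈ Finset.range (n - 1),
              ‖((1 - γ j : ℝ) : ℂ) * z j + (γ j : ℝ) * z (n - 1)‖ ^ 2)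
            + ((n : ℝ) - 2) *
              ∑ j ∈ Finset.range (n - 1), (γ j) ^ 2 * ‖z (n - 1) - z j‖ ^ 2
            - ‖∑ j ∈ Finset.range n, ((1 - γ j : ℝ) : ℂ) * z j‖ ^ 2
                / ((n : ℝ) - 1)) := by
  obtain ⟨m, rfl⟩ : ∃ m, n = m + 1 :=
    Nat.exists_eq_add_one.mpr (Nat.pos_of_ne_zero (by rintro rfl; simp at hγ1))
  obtain ⟨v, hv0, hv⟩ := exists_mulVec_eq_smul_of_isRoot_charpoly
    (A := convexCombinationMatrix z γ m) (by rwa [charpoly_convexCombinationMatrix hγ1])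
  obtain ⟨i₀, -⟩ := Function.ne_iff.mp hv0
  have hm : (1 : ℝ) ≤ m := Nat.one_le_cast.mpr (Nat.one_le_of_lt (mem_range.mp i₀.2))
  have key := norm_sq_sub_trace_div_card_le_of_mulVec_eq_smul hv0 hv
  rw [trace_convexCombinationMatrix hγ1, sum_sum_norm_sq_convexCombinationMatrix,
    Fintype.card_coe, card_range] at key
  simp only [Nat.add_sub_cancel, Nat.cast_add, Nat.cast_one, add_sub_cancel_right,
    show (m : ℝ) + 1 - 2 = m - 1 by ring]
  rw [← Real.sqrt_mul (div_nonneg (by linarith) (by linarith))]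
  simpa using Real.abs_le_sqrt key

theorem zeros_of_convex_combination_in_disk
    (n : ℕ) (hn : 2 ≤ n) (z : ℕ → ℂ) (γ : ℕ → ℝ)
    (hγ0 : ∀ k ∈ Finset.range n, 0 ≤ γ k)
    (hγ1 : ∑ k ∈ Finset.range n, γ k = 1)
    (w : ℂ)
    (hw : (∑ k ∈ Finset.range n, C ((γ k : ℂ)) *
        ∏ j ∈ (Finset.range n).erase k, (X - C (z j))).IsRoot w) :
    ‖w - (∑ j ∈ Finset.range n, ((1 - γ j : ℝ) : ℂ) * z j) / ((n : ℂ) - 1)‖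
      ≤ Real.sqrt (((n : ℝ) - 2) / ((n : ℝ) - 1)) *
        Real.sqrt
          ((∑ j ∈ Finset.range (n - 1),
              ‖((1 - γ j : ℝ) : ℂ) * z j + (γ j : ℝ) * z (n - 1)‖ ^ 2)
            + ((n : ℝ) - 2) *
              ∑ j ∈ Finset.range (n - 1), (γ j) ^ 2 * ‖z (n - 1) - z j‖ ^ 2
            - ‖∑ j ∈ Finset.range n, ((1 - γ j : ℝ) : ℂ) * z j‖ ^ 2
                / ((n : ℝ) - 1)) :=
  zeros_of_convex_combination_in_disk_general n z γ hγ1 w hw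
end

section
/- All zeros of $A_n^\gamma(z)=\sum_{k=1}^n\gamma_k g_k(z)$ lie in the union of discs $\bigcup_{j=1}^{n-1}\{z\in\mathbb{C}: |z-[(1-\gamma_j)z_j+\gamma_j z_n]|\le (n-2)\gamma_j|z_n-z_j|\}$. -/
/-!
Put `m = n - 1`, `a k = w - z k` and `b k = γ k (z m - z k)` for `k < m`. Splitting off the
term `k = m` and using `∑ γ k = 1`, the equation `A(w) = 0` becomes
`∏ a j = ∑ k, b k ∏_{j ≠ k} a j`. Then `x k = b k ∏_{j ≠ k} a j` satisfies
`(diagonal z + b 1ᵀ) x = w x`, so unless `x = 0`, Geršgorin's theorem puts `w` in a disc with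
centre `z k + b k = (1 - γ k) z k + γ k z m` and radius `(m - 1) ‖b k‖`. If `x = 0`, then
`w = z i` for some `i`, and `x i = 0` forces `b i = 0` or `m ≥ 2`; either way the `i`-th disc
contains `w`.
-/

open Polynomial Finset

open Matrix Module.End in
theorem exists_norm_sub_le_of_hasEigenvalue_diagonal_add_vecMulVec {K ι : Type*}
    [NormedField K] [Fintype ι] [DecidableEq ι] {z b : ι → K} {w : K}
    (hw : HasEigenvalue (toLin' (diagonal z + vecMulVec b 1)) w) :
    ∃ k, ‖w - (z k + b k)‖ ≤ ((Fintype.card ι : ℝ) - 1) * ‖b k‖ := by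
  obtain ⟨k, hk⟩ := eigenvalue_mem_ball hw
  have hoff : ∀ j ∈ univ.erase k,
      ‖(diagonal z + vecMulVec b 1 : Matrix ι ι K) k j‖ = ‖b k‖ := fun j hj => by
    simp [diagonal_apply_ne _ (ne_of_mem_erase hj).symm]
  rw [Metric.mem_closedBall, dist_eq_norm, sum_congr rfl hoff, sum_const,
    card_erase_of_mem (mem_univ k), card_univ, nsmul_eq_mul,
    Nat.cast_pred (Fintype.card_pos_iff.mpr ⟨k⟩)] at hk
  exact ⟨k, by simpa using hk⟩

open Matrix Module.End in
theorem exists_norm_sub_le_of_prod_eq_sum_mul_prod_erase {K ι : Type*}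
    [NormedField K] [Fintype ι] [DecidableEq ι] {z b : ι → K} {w : K}
    (h : ∏ j, (w - z j) = ∑ k, b k * ∏ j ∈ univ.erase k, (w - z j)) :
    ∃ k, ‖w - (z k + b k)‖ ≤ ((Fintype.card ι : ℝ) - 1) * ‖b k‖ := by
  set x : ι → K := fun k => b k * ∏ j ∈ univ.erase k, (w - z j) with hx_def
  by_cases hx : x = 0
  · obtain ⟨i, -, hwi⟩ := prod_eq_zero_iff.mp (h.trans (sum_eq_zero fun k _ => congrFun hx k))
    refine ⟨i, ?_⟩
    rw [← sub_sub, hwi, zero_sub, norm_neg]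
    rcases mul_eq_zero.mp (congrFun hx i) with hb | hQ
    · simp [hb]
    · obtain ⟨j, hj, -⟩ := prod_eq_zero_iff.mp hQ
      have : (2 : ℝ) ≤ Fintype.card ι := by
        exact_mod_cast Fintype.one_lt_card_iff.mpr ⟨i, j, (ne_of_mem_erase hj).symm⟩
      nlinarith [norm_nonneg (b i)]
  · refine exists_norm_sub_le_of_hasEigenvalue_diagonal_add_vecMulVec
      (hasEigenvalue_of_hasEigenvector ⟨mem_eigenspace_iff.mpr ?_, hx⟩)
    ext k
    have hk : (w - z k) * ∏ j ∈ univ.erase k, (w - z j) = ∏ j, (w - z j) :=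
      mul_prod_erase _ (fun j => w - z j) (mem_univ k)
    simp only [toLin'_apply, add_mulVec, vecMulVec_mulVec, Pi.add_apply, mulVec_diagonal,
      Pi.smul_apply, one_dotProduct, smul_eq_mul, MulOpposite.smul_eq_mul_unop,
      MulOpposite.unop_op]
    rw [← h, hx_def]
    linear_combination -b k * hk

theorem Finset.exists_norm_sub_le_of_prod_eq_sum_mul_prod_erase {K α : Type*}
    [NormedField K] [DecidableEq α] {s : Finset α} {z b : α → K} {w : K}
    (h : ∏ j ∈ s, (w - z j) = ∑ k ∈ s, b k * ∏ j ∈ s.erase k, (w - z j)) :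
    ∃ k ∈ s, ‖w - (z k + b k)‖ ≤ ((#s : ℝ) - 1) * ‖b k‖ := by
  have h' : ∏ j : s, (w - z j) = ∑ k : s, b k * ∏ j ∈ univ.erase k, (w - z j) := by
    simpa only [univ_eq_attach, prod_erase_attach (fun j => w - z j),
      prod_attach s (fun j => w - z j),
      sum_attach s (fun k => b k * ∏ j ∈ s.erase k, (w - z j))] using h
  obtain ⟨⟨k, hk⟩, hle⟩ := _root_.exists_norm_sub_le_of_prod_eq_sum_mul_prod_erase h'
  exact ⟨k, hk, by simpa using hle⟩

theorem prod_sub_eq_sum_mul_prod_erase_of_sum_mul_prod_erase_eq_zero {K α : Type*}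
    [CommRing K] [DecidableEq α] {s : Finset α} {i : α} (hi : i ∉ s) {z γ : α → K} {w : K}
    (hγ : ∑ k ∈ insert i s, γ k = 1)
    (h : ∑ k ∈ insert i s, γ k * ∏ j ∈ (insert i s).erase k, (w - z j) = 0) :
    ∏ j ∈ s, (w - z j) = ∑ k ∈ s, γ k * (z i - z k) * ∏ j ∈ s.erase k, (w - z j) := by
  have herase : ∀ k ∈ s, ∏ j ∈ (insert i s).erase k, (w - z j) =
      (w - z i) * ∏ j ∈ s.erase k, (w - z j) := fun k hk => by
    rw [erase_insert_of_ne (ne_of_mem_of_not_mem hk hi).symm,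
      prod_insert (fun h => hi (mem_of_mem_erase h))]
  have hsplit : ∀ k ∈ s, γ k * (z i - z k) * ∏ j ∈ s.erase k, (w - z j) =
      γ k * ∏ j ∈ s, (w - z j) - γ k * ∏ j ∈ (insert i s).erase k, (w - z j) :=
        fun k hk => by
    rw [herase k hk, ← mul_prod_erase s (fun j => w - z j) hk]
    ring
  rw [sum_insert hi] at hγ h
  rw [erase_insert hi] at h
  rw [sum_congr rfl hsplit, sum_sub_distrib, ← sum_mul]
  linear_combination h - (∏ j ∈ s, (w - z j)) * hγ

theorem zeros_of_convex_combination_in_gershgorin_discs_general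
    (n : ℕ) (z : ℕ → ℂ) (γ : ℕ → ℝ)
    (hγ0 : ∀ k ∈ Finset.range n, 0 ≤ γ k)
    (hγ1 : ∑ k ∈ Finset.range n, γ k = 1)
    (w : ℂ)
    (hw : (∑ k ∈ Finset.range n, C ((γ k : ℂ)) *
        ∏ j ∈ (Finset.range n).erase k, (X - C (z j))).IsRoot w) :
    ∃ j ∈ Finset.range (n - 1),
      ‖w - (((1 - γ j : ℝ) : ℂ) * z j + (γ j : ℝ) * z (n - 1))‖
        ≤ ((n : ℝ) - 2) * γ j * ‖z (n - 1) - z j‖ := by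
  obtain ⟨m, rfl⟩ : ∃ m, n = m + 1 :=
    Nat.exists_eq_add_one.mpr (Nat.pos_of_ne_zero (by rintro rfl; simp at hγ1))
  have hγ1' : ∑ k ∈ insert m (range m), (γ k : ℂ) = 1 := by
    rw [← range_add_one]; exact_mod_cast hγ1
  have hw' : ∑ k ∈ insert m (range m), (γ k : ℂ) *
      ∏ j ∈ (insert m (range m)).erase k, (w - z j) = 0 := by
    simpa only [IsRoot, eval_finsetSum, eval_mul, eval_prod, eval_sub, eval_X, eval_C,
      range_add_one] using hw
  obtain ⟨k, hk, hle⟩ := Finset.exists_norm_sub_le_of_prod_eq_sum_mul_prod_erase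
    (b := fun k => (γ k : ℂ) * (z m - z k))
    (prod_sub_eq_sum_mul_prod_erase_of_sum_mul_prod_erase_eq_zero notMem_range_self hγ1' hw')
  have hγk : 0 ≤ γ k := hγ0 k (mem_range.mpr (Nat.lt_succ_of_lt (mem_range.mp hk)))
  have hcenter : w - (((1 - γ k : ℝ) : ℂ) * z k + (γ k : ℝ) * z m) =
      w - (z k + γ k * (z m - z k)) := by
    push_cast; ring
  have hradius : ‖(γ k : ℂ) * (z m - z k)‖ = γ k * ‖z m - z k‖ := by
    rw [norm_mul, Complex.norm_real, Real.norm_of_nonneg hγk]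
  refine ⟨k, hk, ?_⟩
  rw [Nat.add_sub_cancel, hcenter]
  calc _ ≤ ((#(range m) : ℝ) - 1) * ‖(γ k : ℂ) * (z m - z k)‖ := hle
    _ = _ := by rw [hradius, card_range]; push_cast; ring

theorem zeros_of_convex_combination_in_gershgorin_discs
    (n : ℕ) (hn : 2 ≤ n) (z : ℕ → ℂ) (γ : ℕ → ℝ)
    (hγ0 : ∀ k ∈ Finset.range n, 0 ≤ γ k)
    (hγ1 : ∑ k ∈ Finset.range n, γ k = 1)
    (w : ℂ)
    (hw : (∑ k ∈ Finset.range n, C ((γ k : ℂ)) *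
        ∏ j ∈ (Finset.range n).erase k, (X - C (z j))).IsRoot w) :
    ∃ j ∈ Finset.range (n - 1),
      ‖w - (((1 - γ j : ℝ) : ℂ) * z j + (γ j : ℝ) * z (n - 1))‖
        ≤ ((n : ℝ) - 2) * γ j * ‖z (n - 1) - z j‖ :=
  zeros_of_convex_combination_in_gershgorin_discs_general n z γ hγ0 hγ1 w hw
end
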